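/- arXiv:2402.12136 — 7 statements merged into one kernel-verified Lean document; each statement's English description precedes it below -/
import Mathlib

section
/- Let P be an n×n complex orthogonal projection matrix and let Ψ : [0,∞) → M_n(ℂ) be measurable with x ↦ Ψ(x)†Ψ(x) integrable and ∫₀^∞ Ψ(x)†Ψ(x) dx = P. If D and D̂ are n×n complex matrices satisfying Ψ(x)·D = Ψ(x)·D̂ for all x ≥ 0, D = P·D, and D̂ = P·D̂, then D = D̂. (Uniqueness of the bound-state dependency matrix, Theorem 4.1(a).) -/
open Matrix MeasureTheory Set

attribute [local instance] Matrix.normedAddCommGroup Matrix.normedSpace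

/-! Right multiplication by a fixed matrix commutes with the integral, so integrating
`Ψ(x)†Ψ(x)·D = Ψ(x)†Ψ(x)·D'` over `(0, ∞)` gives `P·D = P·D'`, which is `D = D'` since `P` fixes both. -/

-- `Matrix` carries the product topology as an instance; integrability is stated for the
-- topology of the sup norm, as in the theorem below.
theorem Matrix.integral_mul_const {X : Type*} [MeasurableSpace X] {μ : Measure X}
    {l m n : Type*} [Fintype l] [Fintype m] [Fintype n] {𝕜 : Type*} [RCLike 𝕜]
    {f : X → Matrix l m 𝕜}
    (hf : @Integrable _ PseudoMetricSpace.toUniformSpace.toTopologicalSpace _ _ _ f μ)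
    (E : Matrix m n 𝕜) :
    ∫ x, f x * E ∂μ = (∫ x, f x ∂μ) * E :=
  (mulRightLinearMap l 𝕜 E).toContinuousLinearMap.integral_comp_comm hf

theorem dependency_matrix_unique_general {n : ℕ}
    (P : Matrix (Fin n) (Fin n) ℂ)
    (Ψ : ℝ → Matrix (Fin n) (Fin n) ℂ)
    (hint : @IntegrableOn _ _ _ PseudoMetricSpace.toUniformSpace.toTopologicalSpace _
      (fun x => (Ψ x)ᴴ * Ψ x) (Set.Ioi (0:ℝ)) volume)
    (hP : ∫ x in Set.Ioi (0:ℝ), (Ψ x)ᴴ * Ψ x = P)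
    (D D' : Matrix (Fin n) (Fin n) ℂ)
    (h1 : ∀ x ≥ (0:ℝ), Ψ x * D = Ψ x * D')
    (h2 : D = P * D) (h3 : D' = P * D') :
    D = D' := by
  have hPD : P * D = P * D' := by
    rw [← hP, ← Matrix.integral_mul_const hint, ← Matrix.integral_mul_const hint]
    refine setIntegral_congr_fun measurableSet_Ioi fun x hx => ?_
    simp only [mul_assoc, h1 x hx.le]
  rw [h2, h3, hPD]

/-- Theorem 4.1(a): uniqueness of the bound-state dependency matrix.  If `P` is an
orthogonal projection, `Ψ : [0,∞) → M_n(ℂ)` is measurable with `Ψ†Ψ` integrable and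
`∫₀^∞ Ψ(x)†Ψ(x) dx = P`, and `D, D̂` satisfy `Ψ(x)·D = Ψ(x)·D̂` for all `x ≥ 0`,
`D = P·D`, `D̂ = P·D̂`, then `D = D̂`. -/
theorem dependency_matrix_unique {n : ℕ}
    (P : Matrix (Fin n) (Fin n) ℂ)
    (hPproj : P * P = P) (hPherm : Pᴴ = P)
    (Ψ : ℝ → Matrix (Fin n) (Fin n) ℂ)
    (hmeas : AEStronglyMeasurable Ψ (volume.restrict (Set.Ioi (0:ℝ))))
    (hint : @IntegrableOn _ _ _ PseudoMetricSpace.toUniformSpace.toTopologicalSpace _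
      (fun x => (Ψ x)ᴴ * Ψ x) (Set.Ioi (0:ℝ)) volume)
    (hP : ∫ x in Set.Ioi (0:ℝ), (Ψ x)ᴴ * Ψ x = P)
    (D D' : Matrix (Fin n) (Fin n) ℂ)
    (h1 : ∀ x ≥ (0:ℝ), Ψ x * D = Ψ x * D')
    (h2 : D = P * D) (h3 : D' = P * D') :
    D = D' :=
  dependency_matrix_unique_general P Ψ hint hP D D' h1 h2 h3
end

section
/- Fix λ ∈ ℂ. Assume the kernel K satisfies the matrix partial differential equation K_xx(x,y) − K_yy(x,y) = Ṽ(x)·K(x,y) − K(x,y)·V(y) on 0 ≤ y ≤ x, where Ṽ(x) := V(x) + 2·(d/dx)K(x,x), together with the boundary relation −K_y(x,0)·A + K(x,0)·B = 0 for all x ≥ 0. Define φ̃(x) := φ(x) + ∫₀ˣ K(x,y)·φ(y) dy. Then φ̃ is twice continuously differentiable and satisfies the perturbed Schrödinger equation φ̃''(x) = (Ṽ(x) − λ)·φ̃(x) for all x ≥ 0, with φ̃(0) = A and φ̃'(0) = B + K(0,0)·A. (Theorem 5.2(a) and (c), with λ = k².) -/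
/-!
Differentiate `φ̃ x = φ x + ∫₀ˣ K(x,y) φ(y) dy` twice under the integral sign; on the wedge
`0 ≤ y ≤ x` Leibniz' rule follows from Fubini over the triangle `0 ≤ y ≤ s ≤ x`. In the second
derivative the PDE trades `∫ K_xx φ` for `∫ K_yy φ + Ṽ ∫ K φ − ∫ K V φ`, Green's identity moves
the two `y`-derivatives onto `φ`, where `φ'' = (V − λ) φ` cancels `∫ K V φ`, and the boundary
relation kills the endpoint `y = 0`. The terms left at `y = x` combine, through
`d/dx K(x,x) = K_x(x,x) + K_y(x,x)`, with the non-integral terms into `(Ṽ − λ) φ̃`.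
-/

open Matrix MeasureTheory Set

attribute [local instance] Matrix.normedAddCommGroup Matrix.normedSpace

open Topology Function

theorem intervalIntegral.integral_integral_swap_triangle
    {E : Type*} [NormedAddCommGroup E] [NormedSpace ℝ E]
    {F : ℝ → ℝ → E} (hF : Continuous (uncurry F)) {a t : ℝ} (hat : a ≤ t) :
    ∫ s in a..t, ∫ y in a..s, F s y = ∫ y in a..t, ∫ s in y..t, F s y := by
  set H : ℝ × ℝ → E := {p : ℝ × ℝ | p.2 ≤ p.1}.indicator (uncurry F)
  have hH_int : Integrable (uncurry fun s y => H (s, y))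
      ((volume.restrict (Ioc a t)).prod (volume.restrict (Ioc a t))) := by
    rw [Measure.prod_restrict]
    refine (IntegrableOn.indicator ?_ (measurableSet_le measurable_snd measurable_fst))
    exact (hF.continuousOn.integrableOn_compact (isCompact_Icc.prod isCompact_Icc)).mono_set
      (prod_mono Ioc_subset_Icc_self Ioc_subset_Icc_self)
  have h_inner_y : ∀ s ∈ Ioc a t, ∫ y in a..s, F s y = ∫ y in Ioc a t, H (s, y) := by
    intro s hs
    have : (fun y => H (s, y)) = (Iic s).indicator (F s) := by
      ext y; simp [H, indicator_apply]
    rw [this, setIntegral_indicator measurableSet_Iic, Ioc_inter_Iic, min_eq_right hs.2,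
      intervalIntegral.integral_of_le hs.1.le]
  have h_inner_s : ∀ y ∈ Ioc a t, ∫ s in y..t, F s y = ∫ s in Ioc a t, H (s, y) := by
    intro y hy
    have : (fun s => H (s, y)) = (Ici y).indicator (fun s => F s y) := by
      ext s; simp [H, indicator_apply]
    have hset : Ioc a t ∩ Ici y = Icc y t := by
      ext s; simp only [mem_inter_iff, mem_Ioc, mem_Ici, mem_Icc]
      exact ⟨fun h => ⟨h.2, h.1.2⟩, fun h => ⟨⟨hy.1.trans_le h.1, h.2⟩, h.1⟩⟩
    rw [this, setIntegral_indicator measurableSet_Ici, hset, integral_Icc_eq_integral_Ioc,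
      intervalIntegral.integral_of_le hy.2]
  rw [intervalIntegral.integral_of_le hat, intervalIntegral.integral_of_le hat,
    setIntegral_congr_fun measurableSet_Ioc h_inner_y,
    setIntegral_congr_fun measurableSet_Ioc h_inner_s]
  exact integral_integral_swap hH_int

variable {E : Type*} [NormedAddCommGroup E] [NormedSpace ℝ E] [CompleteSpace E]

theorem intervalIntegral.integral_eq_sub_of_hasDerivWithinAt_of_mem_nhds
    {f f' : ℝ → E} {a b : ℝ} {S : Set ℝ} (hab : a ≤ b) (hS : Icc a b ⊆ S)
    (hS_nhds : ∀ x ∈ Ioo a b, S ∈ 𝓝 x) (hf : ∀ x ∈ Icc a b, HasDerivWithinAt f (f' x) S x)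
    (hf' : IntervalIntegrable f' volume a b) :
    ∫ x in a..b, f' x = f b - f a :=
  integral_eq_sub_of_hasDerivAt_of_le hab
    (fun x hx => (hf x hx).continuousWithinAt.mono hS)
    (fun x hx => (hf x (Ioo_subset_Icc_self hx)).hasDerivAt (hS_nhds x hx)) hf'

theorem hasDerivWithinAt_of_sub_eq_integral
    {F : ℝ → E} {g : ℝ → ℝ → E} {s : Set ℝ} {x : ℝ} (hx : x ∈ s)
    (hg : ContinuousOn (uncurry g) {p | p.1 ∈ s ∧ p.2 ∈ uIcc x p.1})
    (hF : ∀ t ∈ s, F t - F x = ∫ u in x..t, g t u) :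
    HasDerivWithinAt F (g x x) s x := by
  refine .of_isLittleO (Asymptotics.isLittleO_iff.2 fun c hc => ?_)
  obtain ⟨δ, hδ, hclose⟩ :=
    Metric.continuousWithinAt_iff.1 (hg (x, x) ⟨hx, left_mem_uIcc⟩) c hc
  filter_upwards [self_mem_nhdsWithin, nhdsWithin_le_nhds (Metric.ball_mem_nhds x hδ)]
    with t hts htx
  have hbound : ∀ u ∈ uIoc x t, ‖g t u - g x x‖ ≤ c := fun u hu => by
    have hu' : u ∈ uIcc x t := uIoc_subset_uIcc hu
    rw [← dist_eq_norm]
    refine (hclose (x := (t, u)) ⟨hts, hu'⟩ ?_).le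
    rw [Prod.dist_eq, Real.dist_eq, Real.dist_eq]
    exact max_lt htx ((abs_sub_left_of_mem_uIcc hu').trans_lt htx)
  have hint : IntervalIntegrable (g t) volume x t :=
    (hg.comp (continuous_const.prodMk continuous_id).continuousOn
      fun u hu => ⟨hts, hu⟩).intervalIntegrable
  have hrepr : F t - F x - (t - x) • g x x = ∫ u in x..t, (g t u - g x x) := by
    rw [intervalIntegral.integral_sub hint intervalIntegrable_const,
      intervalIntegral.integral_const, hF t hts]
  rw [hrepr, Real.norm_eq_abs]
  exact intervalIntegral.norm_integral_le_of_norm_le_const hbound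

theorem HasDerivWithinAt.matrix_mul {𝕜 𝔸 : Type*} [NontriviallyNormedField 𝕜] [NormedRing 𝔸]
    [NormedAlgebra 𝕜 𝔸] {l m p : Type*} [Fintype l] [Fintype m] [Fintype p]
    {c : 𝕜 → Matrix l m 𝔸} {d : 𝕜 → Matrix m p 𝔸} {c' : Matrix l m 𝔸} {d' : Matrix m p 𝔸}
    {s : Set 𝕜} {x : 𝕜} (hc : HasDerivWithinAt c c' s x) (hd : HasDerivWithinAt d d' s x) :
    HasDerivWithinAt (fun y => c y * d y) (c' * d x + c x * d') s x := by
  refine hasDerivWithinAt_pi.2 fun i => hasDerivWithinAt_pi.2 fun j => ?_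
  simp only [Matrix.mul_apply, Matrix.add_apply, ← Finset.sum_add_distrib]
  exact HasDerivWithinAt.fun_sum fun k _ =>
    (hasDerivWithinAt_pi.1 (hasDerivWithinAt_pi.1 hc i) k).fun_mul
      (hasDerivWithinAt_pi.1 (hasDerivWithinAt_pi.1 hd k) j)

theorem HasDerivWithinAt.matrix_mul_const {𝕜 𝔸 : Type*} [NontriviallyNormedField 𝕜] [NormedRing 𝔸]
    [NormedAlgebra 𝕜 𝔸] {l m p : Type*} [Fintype l] [Fintype m] [Fintype p]
    {c : 𝕜 → Matrix l m 𝔸} {c' : Matrix l m 𝔸} {s : Set 𝕜} {x : 𝕜}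
    (hc : HasDerivWithinAt c c' s x) (D : Matrix m p 𝔸) :
    HasDerivWithinAt (fun y => c y * D) (c' * D) s x := by
  simpa using hc.matrix_mul (hasDerivWithinAt_const x s D)

theorem intervalIntegral.integral_matrix_mul_sub_mul_eq {𝕜 : Type*} [RCLike 𝕜]
    {m : Type*} [Fintype m] {u u' u'' v v' v'' : ℝ → Matrix m m 𝕜} {a b : ℝ} (hab : a ≤ b)
    (hu : ∀ y ∈ Icc a b, HasDerivWithinAt u (u' y) (Icc a b) y)
    (hu' : ∀ y ∈ Icc a b, HasDerivWithinAt u' (u'' y) (Icc a b) y)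
    (hv : ∀ y ∈ Icc a b, HasDerivWithinAt v (v' y) (Icc a b) y)
    (hv' : ∀ y ∈ Icc a b, HasDerivWithinAt v' (v'' y) (Icc a b) y)
    (hu''c : ContinuousOn u'' (Icc a b)) (hv''c : ContinuousOn v'' (Icc a b)) :
    ∫ y in a..b, (u'' y * v y - u y * v'' y) =
      (u' b * v b - u b * v' b) - (u' a * v a - u a * v' a) := by
  have huc : ContinuousOn u (Icc a b) := fun y hy => (hu y hy).continuousWithinAt
  have hvc : ContinuousOn v (Icc a b) := fun y hy => (hv y hy).continuousWithinAt
  refine integral_eq_sub_of_hasDerivWithinAt_of_mem_nhds (f := fun y => u' y * v y - u y * v' y)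
    (f' := fun y => u'' y * v y - u y * v'' y) hab subset_rfl
    (fun y hy => Icc_mem_nhds hy.1 hy.2) (fun y hy => ?_)
    (((hu''c.fun_mul hvc).fun_sub (huc.fun_mul hv''c)).intervalIntegrable_of_Icc hab)
  convert ((hu' y hy).matrix_mul (hv y hy)).fun_sub ((hu y hy).matrix_mul (hv' y hy)) using 1
  abel

namespace GelfandLevitan

def wedge : Set (ℝ × ℝ) := {p | 0 ≤ p.2 ∧ p.2 ≤ p.1}

theorem exists_continuous_extension_of_continuousOn_wedge {X : Type*} [TopologicalSpace X]
    {G : ℝ → ℝ → X} (hG : ContinuousOn (uncurry G) wedge) :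
    ∃ G' : ℝ → ℝ → X, Continuous (uncurry G') ∧ ∀ x y, 0 ≤ y → y ≤ x → G' x y = G x y := by
  refine ⟨fun x y => G (max x (max y 0)) (max y 0),
    hG.comp_continuous (f := fun p : ℝ × ℝ => (max p.1 (max p.2 0), max p.2 0)) (by fun_prop)
      fun p => ⟨le_max_right _ _, le_max_right _ _⟩, fun x y hy hyx => ?_⟩
  simp only [max_eq_left hy, max_eq_left hyx]

theorem continuousOn_Ici_of_continuousOn_wedge {X : Type*} [TopologicalSpace X]
    {G : ℝ → ℝ → X} (hG : ContinuousOn (uncurry G) wedge) {y : ℝ} (hy : 0 ≤ y) :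
    ContinuousOn (G · y) (Ici y) :=
  hG.comp (continuous_id.prodMk continuous_const).continuousOn fun _ hx => ⟨hy, hx⟩

theorem continuousOn_Icc_of_continuousOn_wedge {X : Type*} [TopologicalSpace X]
    {G : ℝ → ℝ → X} (hG : ContinuousOn (uncurry G) wedge) (x : ℝ) :
    ContinuousOn (G x ·) (Icc 0 x) :=
  hG.comp (continuous_const.prodMk continuous_id).continuousOn fun _ hy => hy

theorem continuousOn_diag_of_continuousOn_wedge {X : Type*} [TopologicalSpace X]
    {G : ℝ → ℝ → X} (hG : ContinuousOn (uncurry G) wedge) :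
    ContinuousOn (fun t => G t t) (Ici 0) :=
  hG.comp (continuous_id.prodMk continuous_id).continuousOn fun _ ht => ⟨ht, le_rfl⟩

theorem sub_eq_integral_of_hasDerivWithinAt_fst {G Gx : ℝ → ℝ → E}
    (hGx : ContinuousOn (uncurry Gx) wedge)
    (hG : ∀ x y, 0 ≤ y → y ≤ x → HasDerivWithinAt (G · y) (Gx x y) (Ici y) x)
    {y a b : ℝ} (hy : 0 ≤ y) (hya : y ≤ a) (hab : a ≤ b) :
    G b y - G a y = ∫ s in a..b, Gx s y :=
  (intervalIntegral.integral_eq_sub_of_hasDerivWithinAt_of_mem_nhds hab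
    (Icc_subset_Ici_iff hab |>.2 hya) (fun _ hs => Ici_mem_nhds (hya.trans_lt hs.1))
    (fun s hs => hG s y hy (hya.trans hs.1))
    (((continuousOn_Ici_of_continuousOn_wedge hGx hy).mono
      (Icc_subset_Ici_iff hab |>.2 hya)).intervalIntegrable_of_Icc hab)).symm

theorem sub_eq_integral_of_hasDerivWithinAt_snd {G Gy : ℝ → ℝ → E}
    (hGy : ContinuousOn (uncurry Gy) wedge)
    (hG : ∀ x y, 0 ≤ y → y ≤ x → HasDerivWithinAt (G x ·) (Gy x y) (Icc 0 x) y)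
    {x a b : ℝ} (ha : 0 ≤ a) (hab : a ≤ b) (hbx : b ≤ x) :
    G x b - G x a = ∫ s in a..b, Gy x s :=
  (intervalIntegral.integral_eq_sub_of_hasDerivWithinAt_of_mem_nhds hab
    (Icc_subset_Icc ha hbx) (fun _ hs => Icc_mem_nhds (ha.trans_lt hs.1) (hs.2.trans_le hbx))
    (fun s hs => hG x s (ha.trans hs.1) (hs.2.trans hbx))
    (((continuousOn_Icc_of_continuousOn_wedge hGy x).mono
      (Icc_subset_Icc ha hbx)).intervalIntegrable_of_Icc hab)).symm

theorem hasDerivWithinAt_diagonal {K Kx Ky : ℝ → ℝ → E}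
    (hKx : ∀ x y, 0 ≤ y → y ≤ x → HasDerivWithinAt (K · y) (Kx x y) (Ici y) x)
    (hKy : ∀ x y, 0 ≤ y → y ≤ x → HasDerivWithinAt (K x ·) (Ky x y) (Icc 0 x) y)
    (hKxc : ContinuousOn (uncurry Kx) wedge) (hKyc : ContinuousOn (uncurry Ky) wedge)
    {x : ℝ} (hx : 0 ≤ x) :
    HasDerivWithinAt (fun t => K t t) (Kx x x + Ky x x) (Ici 0) x := by
  -- `K t t - K x x` splits along the path `(x, x) → (max x t, min x t) → (t, t)`.
  set g : ℝ → ℝ → E := fun t u => Kx u (min x t) + Ky (max x t) u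
  have hg : ContinuousOn (uncurry g) {p | p.1 ∈ Ici 0 ∧ p.2 ∈ uIcc x p.1} :=
    (hKxc.comp (f := fun p : ℝ × ℝ => (p.2, min x p.1)) (by fun_prop)
      fun p hp => ⟨le_min hx hp.1, hp.2.1⟩).add
    (hKyc.comp (f := fun p : ℝ × ℝ => (max x p.1, p.2)) (by fun_prop)
      fun p hp => ⟨(le_min hx hp.1).trans hp.2.1, hp.2.2⟩)
  have hsplit : ∀ t ∈ Ici (0 : ℝ), K t t - K x x = ∫ u in x..t, g t u := by
    intro t ht
    rw [intervalIntegral.integral_add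
      (((continuousOn_Ici_of_continuousOn_wedge hKxc (le_min hx ht)).mono
        Icc_subset_Ici_self).intervalIntegrable)
      (((continuousOn_Icc_of_continuousOn_wedge hKyc _).mono
        (Icc_subset_Icc_left (le_min hx ht))).intervalIntegrable)]
    rcases le_total x t with h | h
    · simp only [min_eq_left h, max_eq_right h]
      rw [← sub_eq_integral_of_hasDerivWithinAt_fst hKxc hKx hx le_rfl h,
        ← sub_eq_integral_of_hasDerivWithinAt_snd hKyc hKy hx h le_rfl]
      abel
    · simp only [min_eq_right h, max_eq_left h]
      rw [intervalIntegral.integral_symm t x, intervalIntegral.integral_symm t x,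
        ← sub_eq_integral_of_hasDerivWithinAt_fst hKxc hKx ht le_rfl h,
        ← sub_eq_integral_of_hasDerivWithinAt_snd hKyc hKy ht h le_rfl]
      abel
  simpa [g] using hasDerivWithinAt_of_sub_eq_integral (mem_Ici.2 hx) hg hsplit

theorem hasDerivWithinAt_integral_wedge {G Gx : ℝ → ℝ → E}
    (hG : ContinuousOn (uncurry G) wedge) (hGx : ContinuousOn (uncurry Gx) wedge)
    (hderiv : ∀ x y, 0 ≤ y → y ≤ x → HasDerivWithinAt (G · y) (Gx x y) (Ici y) x)
    {x : ℝ} (hx : 0 ≤ x) :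
    HasDerivWithinAt (fun t => ∫ y in (0 : ℝ)..t, G t y) (G x x + ∫ y in (0 : ℝ)..x, Gx x y)
      (Ici 0) x := by
  obtain ⟨G', hG'c, hG'⟩ := exists_continuous_extension_of_continuousOn_wedge hG
  obtain ⟨Gx', hGx'c, hGx'⟩ := exists_continuous_extension_of_continuousOn_wedge hGx
  have hdiag : Continuous fun s => G' s s := hG'c.comp (continuous_id.prodMk continuous_id)
  have hinner : Continuous fun s => ∫ y in (0 : ℝ)..s, Gx' s y :=
    intervalIntegral.continuous_parametric_intervalIntegral_of_continuous hGx'c continuous_id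
  -- Fubini over the triangle `0 ≤ y ≤ s ≤ t`, then the fundamental theorem in `s`
  have hprimitive : ∀ t ∈ Ici (0 : ℝ),
      ∫ s in (0 : ℝ)..t, (G' s s + ∫ y in (0 : ℝ)..s, Gx' s y) = ∫ y in (0 : ℝ)..t, G t y := by
    intro t ht
    rw [intervalIntegral.integral_add (hdiag.intervalIntegrable _ _)
        (hinner.intervalIntegrable _ _),
      intervalIntegral.integral_integral_swap_triangle hGx'c ht,
      intervalIntegral.integral_congr (f := fun y => ∫ s in y..t, Gx' s y)
        (g := fun y => G t y - G' y y) fun y hy => ?_,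
      intervalIntegral.integral_sub
        ((continuousOn_Icc_of_continuousOn_wedge hG t).intervalIntegrable_of_Icc ht)
        (hdiag.intervalIntegrable _ _)]
    · abel
    rw [uIcc_of_le ht] at hy
    dsimp only
    rw [hG' y y hy.1 le_rfl, sub_eq_integral_of_hasDerivWithinAt_fst hGx hderiv hy.1 le_rfl hy.2]
    exact intervalIntegral.integral_congr fun s hs => hGx' s y hy.1 (uIcc_of_le hy.2 ▸ hs).1
  have hvalue : G' x x + ∫ y in (0 : ℝ)..x, Gx' x y = G x x + ∫ y in (0 : ℝ)..x, Gx x y := by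
    rw [hG' x x hx le_rfl]
    congr 1
    exact intervalIntegral.integral_congr fun y hy =>
      hGx' x y (uIcc_of_le hx ▸ hy).1 (uIcc_of_le hx ▸ hy).2
  rw [← hvalue]
  exact ((hdiag.add hinner).integral_hasStrictDerivAt 0 x).hasDerivAt.hasDerivWithinAt.congr
    (fun t ht => (hprimitive t ht).symm) (hprimitive x hx).symm

theorem hasDerivWithinAt_integral_mul_wedge {𝕜 : Type*} [RCLike 𝕜] {m : Type*} [Fintype m]
    {K Kx : ℝ → ℝ → Matrix m m 𝕜} {f : ℝ → Matrix m m 𝕜}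
    (hKc : ContinuousOn (uncurry K) wedge) (hKxc : ContinuousOn (uncurry Kx) wedge)
    (hKx : ∀ x y, 0 ≤ y → y ≤ x → HasDerivWithinAt (K · y) (Kx x y) (Ici y) x)
    (hf : ContinuousOn f (Ici 0)) {x : ℝ} (hx : 0 ≤ x) :
    HasDerivWithinAt (fun t => ∫ y in (0 : ℝ)..t, K t y * f y)
      (K x x * f x + ∫ y in (0 : ℝ)..x, Kx x y * f y) (Ici 0) x :=
  have hfw : ContinuousOn (fun p : ℝ × ℝ => f p.2) wedge :=
    hf.comp continuous_snd.continuousOn fun _ hp => hp.1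
  hasDerivWithinAt_integral_wedge (G := fun t y => K t y * f y) (Gx := fun t y => Kx t y * f y)
    (hKc.fun_mul hfw) (hKxc.fun_mul hfw)
    (fun x y hy hyx => (hKx x y hy hyx).matrix_mul_const (f y)) hx

theorem integral_Kxx_mul_eq {𝕜 : Type*} [RCLike 𝕜] {m : Type*} [Fintype m] [DecidableEq m]
    {lam : 𝕜} {V φ φ' φ'' : ℝ → Matrix m m 𝕜} {K Ky Kxx Kyy : ℝ → ℝ → Matrix m m 𝕜}
    {W : Matrix m m 𝕜} {x : ℝ} (hx : 0 ≤ x)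
    (hφ1 : ∀ y ∈ Ici (0 : ℝ), HasDerivWithinAt φ (φ' y) (Ici 0) y)
    (hφ2 : ∀ y ∈ Ici (0 : ℝ), HasDerivWithinAt φ' (φ'' y) (Ici 0) y)
    (hφ''c : ContinuousOn φ'' (Ici 0))
    (hφeq : ∀ y ∈ Ici (0 : ℝ), φ'' y = (V y - lam • 1) * φ y)
    (hKy : ∀ x y : ℝ, 0 ≤ y → y ≤ x → HasDerivWithinAt (K x ·) (Ky x y) (Icc 0 x) y)
    (hKyy : ∀ x y : ℝ, 0 ≤ y → y ≤ x → HasDerivWithinAt (Ky x ·) (Kyy x y) (Icc 0 x) y)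
    (hKyyc : ContinuousOn (uncurry Kyy) wedge)
    (hPDE : ∀ y, 0 ≤ y → y ≤ x → Kxx x y - Kyy x y = W * K x y - K x y * V y)
    (hbc : Ky x 0 * φ 0 = K x 0 * φ' 0) :
    ∫ y in (0 : ℝ)..x, Kxx x y * φ y =
      (Ky x x * φ x - K x x * φ' x) + (W - lam • 1) * ∫ y in (0 : ℝ)..x, K x y * φ y := by
  have hφ1' : ∀ y ∈ Icc 0 x, HasDerivWithinAt φ (φ' y) (Icc 0 x) y :=
    fun y hy => (hφ1 y hy.1).mono Icc_subset_Ici_self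
  have hKc : ContinuousOn (K x ·) (Icc 0 x) :=
    fun y hy => (hKy x y hy.1 hy.2).continuousWithinAt
  have hφc : ContinuousOn φ (Icc 0 x) := fun y hy => (hφ1' y hy).continuousWithinAt
  have hKφc : ContinuousOn (fun y => K x y * φ y) (Icc 0 x) := hKc.mul hφc
  have hgreen_cont : ContinuousOn (fun y => Kyy x y * φ y - K x y * φ'' y) (Icc 0 x) :=
    ((continuousOn_Icc_of_continuousOn_wedge hKyyc x).mul hφc).sub
      (hKc.mul (hφ''c.mono Icc_subset_Ici_self))
  -- `φ'' = (V - λ) φ` turns the `K V` term of the PDE into `K φ''`, leaving Green's integrand.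
  have hpointwise : ∀ y ∈ uIcc 0 x, Kxx x y * φ y =
      (Kyy x y * φ y - K x y * φ'' y) + (W - lam • 1) * (K x y * φ y) := by
    intro y hy
    rw [uIcc_of_le hx] at hy
    rw [sub_eq_iff_eq_add'.1 (hPDE y hy.1 hy.2), hφeq y hy.1]
    simp only [add_mul, sub_mul, mul_sub, smul_mul_assoc, mul_smul_comm, one_mul, mul_assoc]
    abel
  have hgreen := intervalIntegral.integral_matrix_mul_sub_mul_eq hx
    (fun y hy => hKy x y hy.1 hy.2) (fun y hy => hKyy x y hy.1 hy.2) hφ1'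
    (fun y hy => (hφ2 y hy.1).mono Icc_subset_Ici_self)
    (continuousOn_Icc_of_continuousOn_wedge hKyyc x) (hφ''c.mono Icc_subset_Ici_self)
  rw [intervalIntegral.integral_congr hpointwise,
    intervalIntegral.integral_add (hgreen_cont.intervalIntegrable_of_Icc hx)
      ((continuousOn_const.fun_mul hKφc).intervalIntegrable_of_Icc hx),
    hgreen, hbc, sub_self, sub_zero]
  congr 1
  exact (mulLeftLinearMap m 𝕜 (W - lam • 1)).toContinuousLinearMap.intervalIntegral_comp_comm
    (hKφc.intervalIntegrable_of_Icc (μ := volume) hx)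

end GelfandLevitan

open GelfandLevitan

/-- Theorem 5.2(a) and (c) (with `λ = k²`): if the kernel `K` satisfies the matrix PDE
`K_xx − K_yy = Ṽ(x)·K − K·V(y)` on `0 ≤ y ≤ x`, where `Ṽ(x) = V(x) + 2 (d/dx) K(x,x)`,
together with the boundary relation `−K_y(x,0)·A + K(x,0)·B = 0`, then
`φ̃(x) := φ(x) + ∫₀ˣ K(x,y)·φ(y) dy` is twice continuously differentiable, satisfies the
perturbed equation `φ̃'' = (Ṽ − λ)·φ̃` on `[0,∞)`, with `φ̃(0) = A` and
`φ̃'(0) = B + K(0,0)·A`. -/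
theorem gelfand_levitan_transformed_regular_solution {n : ℕ} (lam : ℂ)
    (V φ φ' φ'' : ℝ → Matrix (Fin n) (Fin n) ℂ)
    (K Kx Ky Kxx Kyy : ℝ → ℝ → Matrix (Fin n) (Fin n) ℂ)
    (dK : ℝ → Matrix (Fin n) (Fin n) ℂ)
    (A B : Matrix (Fin n) (Fin n) ℂ)
    -- the potential is continuous on `[0,∞)`
    (hV : ContinuousOn V (Set.Ici (0:ℝ)))
    -- `φ` is the regular solution: twice continuously differentiable,
    -- solving `φ'' = (V − λ)·φ` with `φ(0) = A`, `φ'(0) = B`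
    (hφ1 : ∀ x ∈ Set.Ici (0:ℝ), HasDerivWithinAt φ (φ' x) (Set.Ici (0:ℝ)) x)
    (hφ2 : ∀ x ∈ Set.Ici (0:ℝ), HasDerivWithinAt φ' (φ'' x) (Set.Ici (0:ℝ)) x)
    (hφ''c : ContinuousOn φ'' (Set.Ici (0:ℝ)))
    (hφeq : ∀ x ∈ Set.Ici (0:ℝ), φ'' x = (V x - lam • 1) * φ x)
    (hφ0 : φ 0 = A) (hφ'0 : φ' 0 = B)
    -- `K` is twice continuously differentiable on the region `{0 ≤ y ≤ x}`
    (hKx : ∀ x y : ℝ, 0 ≤ y → y ≤ x →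
      HasDerivWithinAt (fun t => K t y) (Kx x y) (Set.Ici y) x)
    (hKy : ∀ x y : ℝ, 0 ≤ y → y ≤ x →
      HasDerivWithinAt (fun t => K x t) (Ky x y) (Set.Icc (0:ℝ) x) y)
    (hKxx : ∀ x y : ℝ, 0 ≤ y → y ≤ x →
      HasDerivWithinAt (fun t => Kx t y) (Kxx x y) (Set.Ici y) x)
    (hKyy : ∀ x y : ℝ, 0 ≤ y → y ≤ x →
      HasDerivWithinAt (fun t => Ky x t) (Kyy x y) (Set.Icc (0:ℝ) x) y)
    (hKc : ContinuousOn (fun p : ℝ × ℝ => K p.1 p.2) {p : ℝ × ℝ | 0 ≤ p.2 ∧ p.2 ≤ p.1})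
    (hKxc : ContinuousOn (fun p : ℝ × ℝ => Kx p.1 p.2) {p : ℝ × ℝ | 0 ≤ p.2 ∧ p.2 ≤ p.1})
    (hKyc : ContinuousOn (fun p : ℝ × ℝ => Ky p.1 p.2) {p : ℝ × ℝ | 0 ≤ p.2 ∧ p.2 ≤ p.1})
    (hKxxc : ContinuousOn (fun p : ℝ × ℝ => Kxx p.1 p.2) {p : ℝ × ℝ | 0 ≤ p.2 ∧ p.2 ≤ p.1})
    (hKyyc : ContinuousOn (fun p : ℝ × ℝ => Kyy p.1 p.2) {p : ℝ × ℝ | 0 ≤ p.2 ∧ p.2 ≤ p.1})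
    -- `dK` is the derivative of the diagonal `x ↦ K(x,x)`
    (hdK : ∀ x ∈ Set.Ici (0:ℝ), HasDerivWithinAt (fun t => K t t) (dK x) (Set.Ici (0:ℝ)) x)
    -- the matrix PDE on the region, with `Ṽ(x) = V(x) + 2·dK(x)`
    (hPDE : ∀ x y : ℝ, 0 ≤ y → y ≤ x →
      Kxx x y - Kyy x y = (V x + (2:ℂ) • dK x) * K x y - K x y * V y)
    -- the boundary relation `−K_y(x,0)·A + K(x,0)·B = 0`
    (hbc : ∀ x ∈ Set.Ici (0:ℝ), -(Ky x 0) * A + K x 0 * B = 0) :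
    ∃ ψ' ψ'' : ℝ → Matrix (Fin n) (Fin n) ℂ,
      (∀ x ∈ Set.Ici (0:ℝ),
        HasDerivWithinAt (fun t => φ t + ∫ y in (0:ℝ)..t, K t y * φ y)
          (ψ' x) (Set.Ici (0:ℝ)) x) ∧
      (∀ x ∈ Set.Ici (0:ℝ), HasDerivWithinAt ψ' (ψ'' x) (Set.Ici (0:ℝ)) x) ∧
      ContinuousOn ψ'' (Set.Ici (0:ℝ)) ∧
      (∀ x ∈ Set.Ici (0:ℝ),
        ψ'' x = (V x + (2:ℂ) • dK x - lam • 1) *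
          (φ x + ∫ y in (0:ℝ)..x, K x y * φ y)) ∧
      (φ 0 + ∫ y in (0:ℝ)..(0:ℝ), K 0 y * φ y) = A ∧
      ψ' 0 = B + K 0 0 * A := by
  have hφc : ContinuousOn φ (Ici 0) := fun x hx => (hφ1 x hx).continuousWithinAt
  have hdK_eq : ∀ x ∈ Ici (0 : ℝ), dK x = Kx x x + Ky x x := fun x hx =>
    (uniqueDiffOn_Ici 0 x hx).eq_deriv _ (hdK x hx) (hasDerivWithinAt_diagonal hKx hKy hKxc hKyc hx)
  have hdKc : ContinuousOn dK (Ici 0) :=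
    ((continuousOn_diag_of_continuousOn_wedge hKxc).add
      (continuousOn_diag_of_continuousOn_wedge hKyc)).congr hdK_eq
  have hφ_tilde : ∀ x ∈ Ici (0 : ℝ), HasDerivWithinAt
      (fun t => φ t + ∫ y in (0 : ℝ)..t, K t y * φ y)
      (φ' x + (K x x * φ x + ∫ y in (0 : ℝ)..x, Kx x y * φ y)) (Ici 0) x := fun x hx =>
    (hφ1 x hx).fun_add (hasDerivWithinAt_integral_mul_wedge hKc hKxc hKx hφc hx)
  refine ⟨_, fun x => (V x + (2 : ℂ) • dK x - lam • 1) * (φ x + ∫ y in (0 : ℝ)..x, K x y * φ y),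
    hφ_tilde, fun x hx => ?_, ?_, fun _ _ => rfl, by simp [hφ0], by simp [hφ0, hφ'0]⟩
  · refine ((hφ2 x hx).fun_add (((hdK x hx).matrix_mul (hφ1 x hx)).fun_add
      (hasDerivWithinAt_integral_mul_wedge hKxc hKxxc hKxx hφc hx))).congr_deriv ?_
    dsimp only
    rw [integral_Kxx_mul_eq hx hφ1 hφ2 hφ''c hφeq hKy hKyy hKyyc (hPDE x)
      (by rw [hφ0, hφ'0, ← neg_add_eq_zero, ← neg_mul]; exact hbc x hx), hφeq x hx, hdK_eq x hx]
    simp only [mul_add, add_mul, sub_mul, smul_mul_assoc, one_mul, two_smul]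
    abel
  · exact ((hV.add (hdKc.const_smul (2 : ℂ))).sub continuousOn_const).mul
      fun x hx => (hφ_tilde x hx).continuousWithinAt
end

section
/- Let V : [0,∞) → M_n(ℂ) be continuous with V(x)† = V(x) for all x, let κ > 0, let A and B be n×n matrices with A†A + B†B positive definite, let Q be an orthogonal projection, and let C be an n×n matrix with C·Q = C and such that C·v = 0 and Q·v = v together imply v = 0. Let Φ : [0,∞) → M_n(ℂ) be twice continuously differentiable with Φ''(x) = (V(x) + κ²·I)·Φ(x) for all x ≥ 0, Φ(0) = A·C, Φ'(0) = B·C, and assume x ↦ Φ(x)†Φ(x) is integrable on [0,∞). Then for every x ≥ 0 and every nonzero v ∈ ℂⁿ with Q·v = v one has ∫ₓ^∞ ‖Φ(y)·v‖² dy > 0; equivalently, the Hermitian matrix W(x) := ∫ₓ^∞ Φ(y)†Φ(y) dy is positive definite on the range of Q for every x ≥ 0. (The invertibility of the restriction [W_N(x)]₁ established in the proof of Theorem 6.1.) -/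
/-!
Fix `v ≠ 0` with `Q v = v` and put `f y = Φ(y) v`. Then `f'' = (V + κ²) f`, a linear ODE with
continuous coefficients. If the integral vanished, the continuous integrand `‖f‖²` would vanish on
`(x, ∞)`, and backward uniqueness for the first-order system satisfied by `(f, f')` would give
`f(0) = A C v = 0` and `f'(0) = B C v = 0`. Positivity of `A†A + B†B` then forces `C v = 0`, hence
`v = 0`.
-/

open Matrix MeasureTheory Set
open scoped ComplexOrder

attribute [local instance] Matrix.normedAddCommGroup Matrix.normedSpace

noncomputable instance matrixContinuousENorm {n : ℕ} : ContinuousENorm (Matrix (Fin n) (Fin n) ℂ) :=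
  SeminormedAddGroup.toContinuousENorm

section ODE

variable {𝕜 E : Type*} [NontriviallyNormedField 𝕜] [NormedAddCommGroup E] [NormedSpace 𝕜 E]

theorem LipschitzWith.companion (T : E →L[𝕜] E) {K : NNReal} (hT : ‖T‖₊ ≤ K) :
    LipschitzWith (max 1 K) (fun p : E × E => (p.2, T p.1)) :=
  LipschitzWith.prod_snd.prodMk
    ((T.lipschitz.comp LipschitzWith.prod_fst).weaken (by simpa using hT))

variable [NormedSpace ℝ E]

theorem ODE_linear_second_order_eq_zero_of_eqOn_Ioi {W : ℝ → E →L[𝕜] E} {f f' : ℝ → E}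
    {a x : ℝ} (hW : ContinuousOn W (Ici a)) (hax : a ≤ x)
    (hf : ∀ t ∈ Ici a, HasDerivWithinAt f (f' t) (Ici a) t)
    (hf' : ∀ t ∈ Ici a, HasDerivWithinAt f' (W t (f t)) (Ici a) t)
    (hzero : EqOn f 0 (Ioi x)) :
    f a = 0 ∧ f' a = 0 := by
  have hab : a < x + 1 := by linarith
  have hderiv_at (t : ℝ) (ht : a < t) : HasDerivAt f (f' t) t :=
    (hf t ht.le).hasDerivAt (Ici_mem_nhds ht)
  have hf'_end : f' (x + 1) = 0 := by
    have hloc : f =ᶠ[nhds (x + 1)] 0 :=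
      Filter.eventually_of_mem (Ioi_mem_nhds (lt_add_one x)) hzero
    exact ((hderiv_at _ hab).congr_of_eventuallyEq hloc.symm).unique (hasDerivAt_const _ _)
  obtain ⟨K, hK⟩ := (isCompact_Icc.image_of_continuousOn
    (hW.mono (Icc_subset_Ici_self : Icc a (x + 1) ⊆ _)).nnnorm).bddAbove
  have hsol := ODE_solution_unique_of_mem_Icc_left (s := fun _ => univ) (K := max 1 K)
    (v := fun t p => (p.2, W t p.1)) (f := fun t => (f t, f' t)) (g := fun _ => 0)
    (fun t ht => (LipschitzWith.companion (W t)
      (hK (mem_image_of_mem _ (Ioc_subset_Icc_self ht)))).lipschitzOnWith)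
    (fun t ht => ((hf t ht.1).continuousWithinAt.prodMk (hf' t ht.1).continuousWithinAt).mono
      Icc_subset_Ici_self)
    (fun t ht => ((hderiv_at t ht.1).prodMk
      ((hf' t ht.1.le).hasDerivAt (Ici_mem_nhds ht.1))).hasDerivWithinAt)
    (fun _ _ => mem_univ _) continuousOn_const
    (fun t _ => by simpa only [Prod.fst_zero, Prod.snd_zero, map_zero, Prod.mk_zero_zero]
      using hasDerivWithinAt_const t (Iic t) (0 : E × E))
    (fun _ _ => mem_univ _) (Prod.ext (hzero (lt_add_one x)) hf'_end)
  simpa using hsol (left_mem_Icc.2 hab.le)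

end ODE

theorem MeasureTheory.setIntegral_pos_of_continuousOn {X : Type*} [TopologicalSpace X]
    [MeasurableSpace X] [OpensMeasurableSpace X] {μ : Measure X} [μ.IsOpenPosMeasure]
    {f : X → ℝ} {s : Set X} (hs : IsOpen s) (hf : ContinuousOn f s) (hfi : IntegrableOn f s μ)
    (hnn : ∀ y ∈ s, 0 ≤ f y) {y : X} (hy : y ∈ s) (hfy : f y ≠ 0) :
    0 < ∫ x in s, f x ∂μ := by
  rw [setIntegral_pos_iff_support_of_nonneg_ae (ae_restrict_of_forall_mem hs.measurableSet hnn)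
    hfi, inter_comm]
  exact (hf.isOpen_inter_preimage hs isOpen_compl_singleton).measure_pos μ ⟨y, hy, hfy⟩

section Matrix

variable {𝕜 : Type*} [RCLike 𝕜] {m n : Type*} [Fintype m] [Fintype n]

theorem HasDerivWithinAt.mulVec_const {Φ : ℝ → Matrix m n 𝕜} {Φ' : Matrix m n 𝕜} {s : Set ℝ}
    {t : ℝ} (h : HasDerivWithinAt Φ Φ' s t) (v : n → 𝕜) :
    HasDerivWithinAt (fun y => Φ y *ᵥ v) (Φ' *ᵥ v) s t :=
  (LinearMap.toContinuousLinearMap (((mulVecBilin 𝕜 𝕜).flip v).restrictScalars ℝ :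
    Matrix m n 𝕜 →ₗ[ℝ] m → 𝕜)).hasFDerivAt.comp_hasDerivWithinAt t h

theorem Matrix.sum_norm_sq_mulVec (M : Matrix m n 𝕜) (v : n → 𝕜) :
    ∑ i, ‖(M *ᵥ v) i‖ ^ 2 = RCLike.re (star v ⬝ᵥ (Mᴴ * M) *ᵥ v) := by
  rw [← mulVec_mulVec, dotProduct_mulVec, ← star_mulVec, dotProduct, map_sum]
  refine Finset.sum_congr rfl fun i _ => ?_
  rw [Pi.star_apply, RCLike.star_def, RCLike.conj_mul, ← RCLike.ofReal_pow, RCLike.ofReal_re]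

theorem Matrix.PosDef.eq_zero_of_mulVec_eq_zero_of_mulVec_eq_zero {A B : Matrix m n 𝕜}
    (hAB : (Aᴴ * A + Bᴴ * B).PosDef) {w : n → 𝕜} (hA : A *ᵥ w = 0) (hB : B *ᵥ w = 0) :
    w = 0 := by
  by_contra hw
  simpa [add_mulVec, ← mulVec_mulVec, hA, hB] using hAB.dotProduct_mulVec_pos hw

end Matrix

-- Only `Matrix (Fin n) (Fin n) ℂ` carries the `ContinuousENorm` instance `IntegrableOn` needs.
theorem MeasureTheory.IntegrableOn.sum_norm_sq_mulVec {n : ℕ} {α : Type*} [MeasurableSpace α]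
    {μ : Measure α} {s : Set α} {Φ : α → Matrix (Fin n) (Fin n) ℂ}
    (h : IntegrableOn (fun a => (Φ a)ᴴ * Φ a) s μ) (v : Fin n → ℂ) :
    IntegrableOn (fun a => ∑ i, ‖(Φ a *ᵥ v) i‖ ^ 2) s μ := by
  simp_rw [Matrix.sum_norm_sq_mulVec]
  let q : Matrix (Fin n) (Fin n) ℂ →ₗ[ℂ] ℂ :=
    { toFun := fun M => star v ⬝ᵥ M *ᵥ v
      map_add' := fun M N => by simp [add_mulVec, dotProduct_add]
      map_smul' := fun c M => by simp [smul_mulVec, dotProduct_smul] }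
  exact (q.toContinuousLinearMap.integrable_comp h).re

theorem tail_normalization_positive_general {n : ℕ}
    (V : ℝ → Matrix (Fin n) (Fin n) ℂ) (κ : ℝ)
    (A B Q C : Matrix (Fin n) (Fin n) ℂ)
    (hVc : ContinuousOn V (Set.Ici (0:ℝ)))
    (hAB : (Aᴴ * A + Bᴴ * B).PosDef)
    (hCker : ∀ v : Fin n → ℂ, C *ᵥ v = 0 → Q *ᵥ v = v → v = 0)
    (Φ Φ' Φ'' : ℝ → Matrix (Fin n) (Fin n) ℂ)
    (hΦ1 : ∀ x ∈ Set.Ici (0:ℝ), HasDerivWithinAt Φ (Φ' x) (Set.Ici (0:ℝ)) x)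
    (hΦ2 : ∀ x ∈ Set.Ici (0:ℝ), HasDerivWithinAt Φ' (Φ'' x) (Set.Ici (0:ℝ)) x)
    (hΦeq : ∀ x ≥ (0:ℝ), Φ'' x = (V x + ((κ:ℂ)^2) • 1) * Φ x)
    (hΦ0 : Φ 0 = A * C) (hΦ'0 : Φ' 0 = B * C)
    (hΦint : IntegrableOn (fun x => (Φ x)ᴴ * Φ x) (Set.Ioi (0:ℝ))) :
    ∀ x ≥ (0:ℝ), ∀ v : Fin n → ℂ, v ≠ 0 → Q *ᵥ v = v →
      0 < ∫ y in Set.Ioi x, ∑ i, ‖(Φ y *ᵥ v) i‖ ^ 2 := by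
  intro x hx v hv hQv
  let toCLM : Matrix (Fin n) (Fin n) ℂ ≃ₗ[ℂ] ((Fin n → ℂ) →L[ℂ] (Fin n → ℂ)) :=
    Matrix.toLin' ≪≫ₗ LinearMap.toContinuousLinearMap
  have hW : ContinuousOn (fun t => toCLM (V t + ((κ:ℂ)^2) • 1)) (Ici 0) :=
    toCLM.toLinearMap.continuous_of_finiteDimensional.comp_continuousOn
      (hVc.add continuousOn_const)
  have hf (t : ℝ) (ht : t ∈ Ici 0) :
      HasDerivWithinAt (fun y => Φ y *ᵥ v) (Φ' t *ᵥ v) (Ici 0) t :=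
    (hΦ1 t ht).mulVec_const v
  have hf' (t : ℝ) (ht : t ∈ Ici 0) : HasDerivWithinAt (fun y => Φ' y *ᵥ v)
      (toCLM (V t + ((κ:ℂ)^2) • 1) (Φ t *ᵥ v)) (Ici 0) t := by
    have h := (hΦ2 t ht).mulVec_const v
    rwa [hΦeq t ht, ← mulVec_mulVec] at h
  obtain ⟨y, hy, hfy⟩ : ∃ y ∈ Ioi x, Φ y *ᵥ v ≠ 0 := by
    by_contra! hzero
    obtain ⟨hA, hB⟩ := ODE_linear_second_order_eq_zero_of_eqOn_Ioi hW hx hf hf' hzero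
    rw [hΦ0, ← mulVec_mulVec] at hA
    rw [hΦ'0, ← mulVec_mulVec] at hB
    exact hv (hCker v (hAB.eq_zero_of_mulVec_eq_zero_of_mulVec_eq_zero hA hB) hQv)
  have hcont : ContinuousOn (fun y => Φ y *ᵥ v) (Ioi x) := fun t ht =>
    (hf t (hx.trans ht.le)).continuousWithinAt.mono (Ioi_subset_Ici hx)
  refine setIntegral_pos_of_continuousOn isOpen_Ioi (by fun_prop)
    ((hΦint.mono_set (Ioi_subset_Ioi hx)).sum_norm_sq_mulVec v) (fun _ _ => by positivity) hy ?_
  simpa [Finset.sum_eq_zero_iff_of_nonneg, funext_iff] using hfy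

/-- The invertibility of the restriction `[W_N(x)]₁` established in the proof of
Theorem 6.1: under the stated hypotheses on `V`, `A`, `B`, `Q`, `C` and the
Gel'fand–Levitan normalized bound-state solution `Φ`, for every `x ≥ 0` and every
nonzero `v` with `Q·v = v` one has `∫ₓ^∞ ‖Φ(y)·v‖² dy > 0`. -/
theorem tail_normalization_positive {n : ℕ}
    (V : ℝ → Matrix (Fin n) (Fin n) ℂ) (κ : ℝ) (hκ : 0 < κ)
    (A B Q C : Matrix (Fin n) (Fin n) ℂ)
    (hVc : ContinuousOn V (Set.Ici (0:ℝ)))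
    (hVherm : ∀ x ≥ (0:ℝ), (V x)ᴴ = V x)
    (hAB : (Aᴴ * A + Bᴴ * B).PosDef)
    (hQproj : Q * Q = Q) (hQherm : Qᴴ = Q)
    (hCQ : C * Q = C)
    (hCker : ∀ v : Fin n → ℂ, C *ᵥ v = 0 → Q *ᵥ v = v → v = 0)
    (Φ Φ' Φ'' : ℝ → Matrix (Fin n) (Fin n) ℂ)
    (hΦ1 : ∀ x ∈ Set.Ici (0:ℝ), HasDerivWithinAt Φ (Φ' x) (Set.Ici (0:ℝ)) x)
    (hΦ2 : ∀ x ∈ Set.Ici (0:ℝ), HasDerivWithinAt Φ' (Φ'' x) (Set.Ici (0:ℝ)) x)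
    (hΦ''c : ContinuousOn Φ'' (Set.Ici (0:ℝ)))
    (hΦeq : ∀ x ≥ (0:ℝ), Φ'' x = (V x + ((κ:ℂ)^2) • 1) * Φ x)
    (hΦ0 : Φ 0 = A * C) (hΦ'0 : Φ' 0 = B * C)
    (hΦint : IntegrableOn (fun x => (Φ x)ᴴ * Φ x) (Set.Ioi (0:ℝ))) :
    ∀ x ≥ (0:ℝ), ∀ v : Fin n → ℂ, v ≠ 0 → Q *ᵥ v = v →
      0 < ∫ y in Set.Ioi x, ∑ i, ‖(Φ y *ᵥ v) i‖ ^ 2 :=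
  tail_normalization_positive_general V κ A B Q C hVc hAB hCker Φ Φ' Φ'' hΦ1 hΦ2 hΦeq hΦ0 hΦ'0 hΦint
end

section
/- Let V : [0,∞) → M_n(ℂ) be continuous with V(x)† = V(x) for all x, let κ ∈ ℝ, let Q be an orthogonal projection, and let Φ : [0,∞) → M_n(ℂ) be twice continuously differentiable with Φ''(x) = (V(x) + κ²·I)·Φ(x), Φ(x)·Q = Φ(x), and Φ'(x)†·Φ(x) = Φ(x)†·Φ'(x) for all x ≥ 0. Let W, W⁺ : [0,∞) → M_n(ℂ) be differentiable with W'(x) = −Φ(x)†Φ(x), W(x)W⁺(x) = W⁺(x)W(x) = Q, and W⁺(x)·Q = Q·W⁺(x) = W⁺(x) for all x. Put 𝒜(x,y) := Φ(x)·W⁺(x)·Φ(y)† and Ṽ(x) := V(x) + 2·(d/dx)[Φ(x)W⁺(x)Φ(x)†]. Then 𝒜 satisfies the hyperbolic matrix partial differential equation 𝒜_xx(x,y) − 𝒜_yy(x,y) = Ṽ(x)·𝒜(x,y) − 𝒜(x,y)·V(y) for all x, y ≥ 0; here 𝒜_xx(x,y) is the second derivative of x ↦ Φ(x)W⁺(x)Φ(y)†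 and 𝒜_yy(x,y) = Φ(x)W⁺(x)·(Φ''(y))†. (Theorem 6.2(c)–(d).) -/
open Matrix Set

attribute [local instance] Matrix.normedAddCommGroup Matrix.normedSpace

/-!
Differentiating `W⁺ W = Q` and `W⁺ Q = W⁺` gives `(W⁺)' = W⁺ Φ†Φ W⁺`, so that
`(Φ W⁺)' = Φ' W⁺ + P (Φ W⁺)` with `P = Φ W⁺ Φ†`. Differentiating once more and using the
symmetry `Φ'†Φ = Φ†Φ'` of the Wronskian, the extra terms collapse to `P' (Φ W⁺)`, whence
`(Φ W⁺)'' = Φ'' W⁺ + 2 P' (Φ W⁺) = (V + 2 P' + κ²) Φ W⁺`. On the other side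
`Φ(y)''† = Φ(y)† V(y) + κ² Φ(y)†` because `V` is selfadjoint, and the `κ²` terms cancel.
-/

section MatrixCalculus

variable {𝕜 𝔸 : Type*} [NontriviallyNormedField 𝕜] [NormedRing 𝔸] [NormedAlgebra 𝕜 𝔸]
  {l m n : Type*} {s : Set 𝕜} {x : 𝕜}

theorem HasDerivWithinAt.matrix_mul_s8 [Fintype m] [Fintype n]
    {A : 𝕜 → Matrix l m 𝔸} {B : 𝕜 → Matrix m n 𝔸} {A' : Matrix l m 𝔸} {B' : Matrix m n 𝔸}
    (hA : HasDerivWithinAt A A' s x) (hB : HasDerivWithinAt B B' s x) :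
    HasDerivWithinAt (fun t => A t * B t) (A' * B x + A x * B') s x := by
  have hAij := fun i j => hasDerivWithinAt_pi.mp (hasDerivWithinAt_pi.mp hA i) j
  have hBij := fun i j => hasDerivWithinAt_pi.mp (hasDerivWithinAt_pi.mp hB i) j
  refine hasDerivWithinAt_pi.mpr fun i => hasDerivWithinAt_pi.mpr fun j => ?_
  simp only [Matrix.add_apply, Matrix.mul_apply, ← Finset.sum_add_distrib]
  exact HasDerivWithinAt.fun_sum fun k _ => (hAij i k).fun_mul (hBij k j)

theorem HasDerivWithinAt.matrix_mul_const_s8 [Fintype m] [Fintype n]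
    {A : 𝕜 → Matrix l m 𝔸} {A' : Matrix l m 𝔸} (hA : HasDerivWithinAt A A' s x)
    (C : Matrix m n 𝔸) :
    HasDerivWithinAt (fun t => A t * C) (A' * C) s x := by
  simpa using hA.matrix_mul_s8 (hasDerivWithinAt_const x s C)

theorem HasDerivWithinAt.matrix_conjTranspose [StarRing 𝕜] [TrivialStar 𝕜] [StarRing 𝔸]
    [StarModule 𝕜 𝔸] [ContinuousStar 𝔸] [Fintype m] [Fintype n]
    {A : 𝕜 → Matrix m n 𝔸} {A' : Matrix m n 𝔸} (hA : HasDerivWithinAt A A' s x) :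
    HasDerivWithinAt (fun t => (A t)ᴴ) A'ᴴ s x :=
  hasDerivWithinAt_pi.mpr fun i => hasDerivWithinAt_pi.mpr fun j =>
    (hasDerivWithinAt_pi.mp (hasDerivWithinAt_pi.mp hA j) i).star

theorem HasDerivWithinAt.pseudoinverse_deriv_eq [Fintype m]
    {W Wp : 𝕜 → Matrix m m 𝔸} {W' Wp' Q : Matrix m m 𝔸}
    (hs : UniqueDiffWithinAt 𝕜 s x) (hx : x ∈ s)
    (hW : HasDerivWithinAt W W' s x) (hWp : HasDerivWithinAt Wp Wp' s x)
    (hWpW : ∀ t ∈ s, Wp t * W t = Q) (hWpQ : ∀ t ∈ s, Wp t * Q = Wp t)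
    (hWWp : W x * Wp x = Q) :
    Wp' = -(Wp x * W' * Wp x) := by
  have hWpW' : Wp' * W x + Wp x * W' = 0 :=
    hs.eq_deriv s (hWp.matrix_mul_s8 hW)
      ((hasDerivWithinAt_const x s Q).congr hWpW (hWpW x hx))
  have hWpQ' : Wp' * Q = Wp' :=
    hs.eq_deriv s (hWp.matrix_mul_const_s8 Q) (hWp.congr hWpQ (hWpQ x hx))
  calc Wp' = Wp' * W x * Wp x := by rw [mul_assoc, hWWp, hWpQ']
    _ = -(Wp x * W' * Wp x) := by rw [eq_neg_of_add_eq_zero_left hWpW', neg_mul]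

end MatrixCalculus

theorem wronskian_pseudoinverse_identity {R : Type*} [Ring R] {φ φ' ψ ψ' p p' : R}
    (hp' : p' = p * (ψ * φ) * p) (hwr : ψ' * φ = ψ * φ') :
    φ' * p' + φ * p * ψ * (φ' * p + φ * p') = ((φ' * p + φ * p') * ψ + φ * p * ψ') * (φ * p) := by
  have hdiff : φ' * p' + φ * p * ψ * (φ' * p + φ * p')
      - ((φ' * p + φ * p') * ψ + φ * p * ψ') * (φ * p) = φ * p * (ψ * φ' - ψ' * φ) * p := by
    subst hp'
    noncomm_ring
  rwa [hwr, sub_self, mul_zero, zero_mul, sub_eq_zero] at hdiff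

theorem hasDerivWithinAt_deriv_mul_pseudoinverse {𝕜 𝔸 m : Type*} [NontriviallyNormedField 𝕜]
    [StarRing 𝕜] [TrivialStar 𝕜] [NormedRing 𝔸] [NormedAlgebra 𝕜 𝔸] [StarRing 𝔸]
    [StarModule 𝕜 𝔸] [ContinuousStar 𝔸] [Fintype m] [DecidableEq m] {s : Set 𝕜} {x : 𝕜}
    {Φ Φ' Wp Wp' : 𝕜 → Matrix m m 𝔸} {Φ'' g : Matrix m m 𝔸}
    (hs : UniqueDiffWithinAt 𝕜 s x) (hx : x ∈ s)
    (hΦ : HasDerivWithinAt Φ (Φ' x) s x) (hΦ' : HasDerivWithinAt Φ' Φ'' s x)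
    (hWp : HasDerivWithinAt Wp (Wp' x) s x)
    (hWp' : ∀ t ∈ s, Wp' t = Wp t * ((Φ t)ᴴ * Φ t) * Wp t)
    (hwr : (Φ' x)ᴴ * Φ x = (Φ x)ᴴ * Φ' x)
    (hg : HasDerivWithinAt (fun t => Φ t * Wp t * (Φ t)ᴴ) g s x) :
    HasDerivWithinAt (fun t => Φ' t * Wp t + Φ t * Wp' t)
      (Φ'' * Wp x + 2 * g * (Φ x * Wp x)) s x := by
  have hA := hΦ.matrix_mul_s8 hWp
  have hg_eq : g = (Φ' x * Wp x + Φ x * Wp' x) * (Φ x)ᴴ + Φ x * Wp x * (Φ' x)ᴴ :=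
    hs.eq_deriv s hg (hA.matrix_mul_s8 hΦ.matrix_conjTranspose)
  have hA'_eq : ∀ t ∈ s, Φ' t * Wp t + Φ t * Wp' t
      = Φ' t * Wp t + Φ t * Wp t * (Φ t)ᴴ * (Φ t * Wp t) := fun t ht => by
    rw [hWp' t ht]
    noncomm_ring
  have hcollapse : Φ' x * Wp' x + Φ x * Wp x * (Φ x)ᴴ * (Φ' x * Wp x + Φ x * Wp' x)
      = g * (Φ x * Wp x) := by
    rw [hg_eq]
    exact wronskian_pseudoinverse_identity (hWp' x hx) hwr
  refine (((hΦ'.matrix_mul_s8 hWp).fun_add (hg.matrix_mul_s8 hA)).congr hA'_eq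
    (hA'_eq x hx)).congr_deriv ?_
  rw [two_mul, add_mul, ← hcollapse]
  abel

theorem gelfand_levitan_kernel_pde_general {n : ℕ}
    (V : ℝ → Matrix (Fin n) (Fin n) ℂ) (κ : ℝ)
    (Q : Matrix (Fin n) (Fin n) ℂ)
    (Φ Φ' Φ'' W Wp Wp' g : ℝ → Matrix (Fin n) (Fin n) ℂ)
    (hVherm : ∀ x ≥ (0:ℝ), (V x)ᴴ = V x)
    (hΦ1 : ∀ x ∈ Set.Ici (0:ℝ), HasDerivWithinAt Φ (Φ' x) (Set.Ici (0:ℝ)) x)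
    (hΦ2 : ∀ x ∈ Set.Ici (0:ℝ), HasDerivWithinAt Φ' (Φ'' x) (Set.Ici (0:ℝ)) x)
    (hΦeq : ∀ x ≥ (0:ℝ), Φ'' x = (V x + ((κ:ℂ)^2) • 1) * Φ x)
    (hWronsk : ∀ x ≥ (0:ℝ), (Φ' x)ᴴ * Φ x = (Φ x)ᴴ * Φ' x)
    (hW : ∀ x ∈ Set.Ici (0:ℝ), HasDerivWithinAt W (-((Φ x)ᴴ * Φ x)) (Set.Ici (0:ℝ)) x)
    (hWp : ∀ x ∈ Set.Ici (0:ℝ), HasDerivWithinAt Wp (Wp' x) (Set.Ici (0:ℝ)) x)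
    (h1 : ∀ x ≥ (0:ℝ), W x * Wp x = Q)
    (h2 : ∀ x ≥ (0:ℝ), Wp x * W x = Q)
    (h3 : ∀ x ≥ (0:ℝ), Wp x * Q = Wp x)
    (hg : ∀ x ∈ Set.Ici (0:ℝ),
      HasDerivWithinAt (fun t => Φ t * Wp t * (Φ t)ᴴ) (g x) (Set.Ici (0:ℝ)) x) :
    ∀ y ≥ (0:ℝ), ∀ x ∈ Set.Ici (0:ℝ),
      HasDerivWithinAt (fun t => Φ t * Wp t * (Φ y)ᴴ)
        (Φ' x * Wp x * (Φ y)ᴴ + Φ x * Wp' x * (Φ y)ᴴ) (Set.Ici (0:ℝ)) x ∧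
      HasDerivWithinAt (fun t => Φ' t * Wp t * (Φ y)ᴴ + Φ t * Wp' t * (Φ y)ᴴ)
        (Φ x * Wp x * (Φ'' y)ᴴ
          + (V x + (2:ℂ) • g x) * (Φ x * Wp x * (Φ y)ᴴ)
          - Φ x * Wp x * (Φ y)ᴴ * V y) (Set.Ici (0:ℝ)) x := by
  intro y hy x hx
  have hWp' : ∀ t ∈ Ici (0:ℝ), Wp' t = Wp t * ((Φ t)ᴴ * Φ t) * Wp t := fun t ht => by
    rw [(hW t ht).pseudoinverse_deriv_eq (uniqueDiffOn_Ici 0 t ht) ht (hWp t ht) h2 h3 (h1 t ht),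
      mul_neg, neg_mul, neg_neg]
  refine ⟨by simpa only [add_mul] using ((hΦ1 x hx).matrix_mul_s8 (hWp x hx)).matrix_mul_const_s8 (Φ y)ᴴ,
    ?_⟩
  have hA'' := (hasDerivWithinAt_deriv_mul_pseudoinverse
    (uniqueDiffOn_Ici 0 x hx) hx (hΦ1 x hx) (hΦ2 x hx) (hWp x hx)
    hWp' (hWronsk x hx) (hg x hx)).matrix_mul_const_s8 (Φ y)ᴴ
  simp only [add_mul] at hA''
  have hΦ''_adj : (Φ'' y)ᴴ = (Φ y)ᴴ * V y + ((κ:ℂ)^2) • (Φ y)ᴴ := by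
    rw [hΦeq y hy, conjTranspose_mul, conjTranspose_add, hVherm y hy, conjTranspose_smul,
      conjTranspose_one, mul_add, mul_smul_comm, mul_one, star_pow, Complex.star_def,
      Complex.conj_ofReal]
  convert hA'' using 1
  rw [hΦeq x hx, hΦ''_adj]
  simp only [mul_add, add_mul, mul_assoc, smul_mul_assoc, mul_smul_comm, one_mul, two_smul, two_mul]
  abel

/-- Theorem 6.2(c)–(d): with `𝒜(x,y) = Φ(x)·W⁺(x)·Φ(y)†` and
`Ṽ(x) = V(x) + 2·(d/dx)[Φ(x)W⁺(x)Φ(x)†]` (the derivative being `g`), the kernel `𝒜`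
satisfies the hyperbolic matrix PDE `𝒜_xx − 𝒜_yy = Ṽ(x)·𝒜 − 𝒜·V(y)`, where
`𝒜_x(x,y) = Φ'(x)W⁺(x)Φ(y)† + Φ(x)(W⁺)'(x)Φ(y)†`, `𝒜_xx` is its `x`-derivative, and
`𝒜_yy(x,y) = Φ(x)W⁺(x)·(Φ''(y))†`. -/
theorem gelfand_levitan_kernel_pde {n : ℕ}
    (V : ℝ → Matrix (Fin n) (Fin n) ℂ) (κ : ℝ)
    (Q : Matrix (Fin n) (Fin n) ℂ)
    (hQproj : Q * Q = Q) (hQherm : Qᴴ = Q)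
    (Φ Φ' Φ'' W Wp Wp' g : ℝ → Matrix (Fin n) (Fin n) ℂ)
    (hVc : ContinuousOn V (Set.Ici (0:ℝ)))
    (hVherm : ∀ x ≥ (0:ℝ), (V x)ᴴ = V x)
    (hΦ1 : ∀ x ∈ Set.Ici (0:ℝ), HasDerivWithinAt Φ (Φ' x) (Set.Ici (0:ℝ)) x)
    (hΦ2 : ∀ x ∈ Set.Ici (0:ℝ), HasDerivWithinAt Φ' (Φ'' x) (Set.Ici (0:ℝ)) x)
    (hΦ''c : ContinuousOn Φ'' (Set.Ici (0:ℝ)))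
    (hΦeq : ∀ x ≥ (0:ℝ), Φ'' x = (V x + ((κ:ℂ)^2) • 1) * Φ x)
    (hΦQ : ∀ x ≥ (0:ℝ), Φ x * Q = Φ x)
    (hWronsk : ∀ x ≥ (0:ℝ), (Φ' x)ᴴ * Φ x = (Φ x)ᴴ * Φ' x)
    (hW : ∀ x ∈ Set.Ici (0:ℝ), HasDerivWithinAt W (-((Φ x)ᴴ * Φ x)) (Set.Ici (0:ℝ)) x)
    (hWp : ∀ x ∈ Set.Ici (0:ℝ), HasDerivWithinAt Wp (Wp' x) (Set.Ici (0:ℝ)) x)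
    (h1 : ∀ x ≥ (0:ℝ), W x * Wp x = Q)
    (h2 : ∀ x ≥ (0:ℝ), Wp x * W x = Q)
    (h3 : ∀ x ≥ (0:ℝ), Wp x * Q = Wp x)
    (h4 : ∀ x ≥ (0:ℝ), Q * Wp x = Wp x)
    (hg : ∀ x ∈ Set.Ici (0:ℝ),
      HasDerivWithinAt (fun t => Φ t * Wp t * (Φ t)ᴴ) (g x) (Set.Ici (0:ℝ)) x) :
    ∀ y ≥ (0:ℝ), ∀ x ∈ Set.Ici (0:ℝ),
      HasDerivWithinAt (fun t => Φ t * Wp t * (Φ y)ᴴ)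
        (Φ' x * Wp x * (Φ y)ᴴ + Φ x * Wp' x * (Φ y)ᴴ) (Set.Ici (0:ℝ)) x ∧
      HasDerivWithinAt (fun t => Φ' t * Wp t * (Φ y)ᴴ + Φ t * Wp' t * (Φ y)ᴴ)
        (Φ x * Wp x * (Φ'' y)ᴴ
          + (V x + (2:ℂ) • g x) * (Φ x * Wp x * (Φ y)ᴴ)
          - Φ x * Wp x * (Φ y)ᴴ * V y) (Set.Ici (0:ℝ)) x :=
  gelfand_levitan_kernel_pde_general V κ Q Φ Φ' Φ'' W Wp Wp' g hVherm hΦ1 hΦ2 hΦeq hWronsk hW hWp h1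
    h2 h3 hg
end

section
/- Let κ > 0 and let P be an n×n orthogonal projection. For k ∈ ℝ set U(k) := I + (2iκ/(k − iκ))·P. Then U(k) is unitary, with U(k)† = U(k)⁻¹ = I − (2iκ/(k + iκ))·P. Consequently, if J, J̃ : ℝ → M_n(ℂ) satisfy J̃(k) = U(k)·J(k) for all k ∈ ℝ, then: (i) J̃(k)†·J̃(k) = J(k)†·J(k) for all k ∈ ℝ; and (ii) for every k ∈ ℝ such that J(k) is invertible, the scattering matrices S(k) := −J(−k)·J(k)⁻¹ and S̃(k) := −J̃(−k)·J̃(k)⁻¹ satisfy S̃(k) = [I − (2iκ/(k+iκ))·P]·S(k)·[I − (2iκ/(k+iκ))·P]. (Theorem 6.4(b) and (e): the continuous part of the spectral measure is unchanged, and the transformation of the scattering matrix under removal of the bound state at k = iκ_N.) -/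
/-!
For an orthogonal projection `P` one has `(1 + a • P) (1 + b • P) = 1 + (a + b + a b) • P` and
`(1 + a • P)ᴴ = 1 + conj a • P`, so `1 + a • P` is unitary as soon as `|1 + a| = 1`. With
`a(k) = 2iκ/(k - iκ)` we get `1 + a(k) = (k + iκ)/(k - iκ)`, of modulus one, and `conj a(k) = a(-k)`.
Hence `U(k)† = U(-k) = U(k)⁻¹`: unitarity of `U(k)` leaves `J†J` unchanged, and inverting
`J̃(k) = U(k) J(k)` produces the factor `U(k)⁻¹ = U(-k)` on the right of `S̃(k)`, matching the
factor `U(-k)` on the left coming from `J̃(-k)`.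
-/

open Matrix Complex

section Idempotent

variable {𝕜 R : Type*} [CommRing 𝕜] [Ring R] [Algebra 𝕜 R] {P : R}

theorem IsIdempotentElem.one_add_smul_mul_one_add_smul (hP : IsIdempotentElem P) (a b : 𝕜) :
    (1 + a • P) * (1 + b • P) = 1 + (a + b + a * b) • P := by
  simp only [mul_add, add_mul, one_mul, mul_one, smul_mul_smul_comm, hP.eq]
  module

end Idempotent

section StarProjection

variable {𝕜 R : Type*} [CommRing 𝕜] [StarRing 𝕜] [Ring R] [StarRing R] [Algebra 𝕜 R]
  [StarModule 𝕜 R] {P : R}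

theorem IsStarProjection.star_one_add_smul (hP : IsStarProjection P) (a : 𝕜) :
    star (1 + a • P) = 1 + star a • P := by
  rw [star_add, star_one, star_smul, hP.isSelfAdjoint.star_eq]

theorem IsStarProjection.one_add_smul_mem_unitary (hP : IsStarProjection P) {a : 𝕜}
    (ha : 1 + a ∈ unitary 𝕜) : 1 + a • P ∈ unitary R := by
  have h : star (1 + a) * (1 + a) = 1 := Unitary.star_mul_self_of_mem ha
  rw [star_add, star_one] at h
  rw [Unitary.mem_iff, hP.star_one_add_smul, hP.isIdempotentElem.one_add_smul_mul_one_add_smul,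
    hP.isIdempotentElem.one_add_smul_mul_one_add_smul]
  constructor
  · rw [show star a + a + star a * a = 0 by linear_combination h, zero_smul, add_zero]
  · rw [show a + star a + a * star a = 0 by linear_combination h, zero_smul, add_zero]

end StarProjection

theorem Unitary.star_mul_self_mul_left {R : Type*} [Monoid R] [StarMul R] {U : R}
    (hU : U ∈ unitary R) (A : R) : star (U * A) * (U * A) = star A * A := by
  rw [star_mul, mul_assoc, ← mul_assoc (star U), Unitary.star_mul_self_of_mem hU, one_mul]

noncomputable def scatteringMatrix {m R : Type*} [Fintype m] [DecidableEq m] [CommRing R]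
    (J : ℝ → Matrix m m R) (k : ℝ) : Matrix m m R :=
  -J (-k) * (J k)⁻¹

theorem scatteringMatrix_of_mul_left {m R : Type*} [Fintype m] [DecidableEq m] [CommRing R]
    {J Jt U : ℝ → Matrix m m R} (hJt : ∀ k, Jt k = U k * J k) {k : ℝ}
    (hU : U k * U (-k) = 1) :
    scatteringMatrix Jt k = U (-k) * scatteringMatrix J k * U (-k) := by
  rw [scatteringMatrix, scatteringMatrix, hJt, hJt, Matrix.mul_inv_rev, Matrix.inv_eq_right_inv hU]
  simp only [neg_mul, mul_neg, mul_assoc]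

noncomputable def boundStateShift (κ k : ℝ) : ℂ := 2 * I * κ / (k - I * κ)

theorem boundStateShift_neg (κ k : ℝ) :
    boundStateShift κ (-k) = -(2 * I * κ / (k + I * κ)) := by
  rw [boundStateShift, ofReal_neg, ← neg_add', div_neg]

theorem star_boundStateShift (κ k : ℝ) : star (boundStateShift κ k) = boundStateShift κ (-k) := by
  rw [boundStateShift_neg, boundStateShift, star_div₀, star_sub]
  simp [neg_div]

theorem one_add_boundStateShift_mem_unitary (κ k : ℝ) : 1 + boundStateShift κ k ∈ unitary ℂ := by
  rw [Unitary.mem_iff_star_mul_self, star_add, star_one, star_boundStateShift, boundStateShift_neg]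
  -- `k - iκ = 0` only for `k = κ = 0`, where the division by zero makes the shift `0`.
  by_cases h : (k : ℂ) - I * κ = 0
  · have hk : k = 0 ∧ κ = 0 := by simpa [Complex.ext_iff] using h
    simp [boundStateShift, hk]
  · have h' : (k : ℂ) + I * κ ≠ 0 := by
      intro h'; apply h; simpa [Complex.ext_iff] using h'
    rw [boundStateShift]
    field_simp
    ring

theorem jost_scattering_transform_remove_bound_state_general {n : ℕ}
    (κ : ℝ)
    (P : Matrix (Fin n) (Fin n) ℂ)
    (hPproj : P * P = P) (hPherm : Pᴴ = P)
    (J Jt : ℝ → Matrix (Fin n) (Fin n) ℂ)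
    (hJt : ∀ k : ℝ,
      Jt k = (1 + ((2 * Complex.I * (κ:ℂ)) / ((k:ℂ) - Complex.I * (κ:ℂ))) • P) * J k) :
    (∀ k : ℝ,
      (1 + ((2 * Complex.I * (κ:ℂ)) / ((k:ℂ) - Complex.I * (κ:ℂ))) • P)ᴴ
          = 1 - ((2 * Complex.I * (κ:ℂ)) / ((k:ℂ) + Complex.I * (κ:ℂ))) • P ∧
      (1 + ((2 * Complex.I * (κ:ℂ)) / ((k:ℂ) - Complex.I * (κ:ℂ))) • P) *
          (1 - ((2 * Complex.I * (κ:ℂ)) / ((k:ℂ) + Complex.I * (κ:ℂ))) • P) = 1 ∧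
      (1 - ((2 * Complex.I * (κ:ℂ)) / ((k:ℂ) + Complex.I * (κ:ℂ))) • P) *
          (1 + ((2 * Complex.I * (κ:ℂ)) / ((k:ℂ) - Complex.I * (κ:ℂ))) • P) = 1) ∧
    (∀ k : ℝ, (Jt k)ᴴ * Jt k = (J k)ᴴ * J k) ∧
    (∀ k : ℝ, IsUnit (J k) →
      -(Jt (-k)) * (Jt k)⁻¹
        = (1 - ((2 * Complex.I * (κ:ℂ)) / ((k:ℂ) + Complex.I * (κ:ℂ))) • P) *
            (-(J (-k)) * (J k)⁻¹) *
            (1 - ((2 * Complex.I * (κ:ℂ)) / ((k:ℂ) + Complex.I * (κ:ℂ))) • P)) := by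
  have hP : IsStarProjection P := ⟨hPproj, hPherm⟩
  have hU (k : ℝ) : 1 + boundStateShift κ k • P ∈ unitary (Matrix (Fin n) (Fin n) ℂ) :=
    hP.one_add_smul_mem_unitary (one_add_boundStateShift_mem_unitary κ k)
  have hstar (k : ℝ) :
      star (1 + boundStateShift κ k • P) = 1 + boundStateShift κ (-k) • P := by
    rw [hP.star_one_add_smul, star_boundStateShift]
  have hinv (k : ℝ) : (1 + boundStateShift κ k • P) * (1 + boundStateShift κ (-k) • P) = 1 := by
    rw [← hstar]; exact Unitary.mul_star_self_of_mem (hU k)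
  have hV (k : ℝ) :
      1 - (2 * I * κ / (k + I * κ)) • P = 1 + boundStateShift κ (-k) • P := by
    rw [boundStateShift_neg, neg_smul, sub_eq_add_neg]
  refine ⟨fun k => ⟨?_, ?_, ?_⟩, fun k => ?_, fun k _ => ?_⟩
  · exact (hstar k).trans (hV k).symm
  · rw [hV]; exact hinv k
  · rw [hV]
    have h := hinv (-k)
    rw [neg_neg] at h
    exact h
  · rw [hJt]; exact Unitary.star_mul_self_mul_left (hU k) (J k)
  · rw [hV]
    exact scatteringMatrix_of_mul_left (U := fun k => 1 + boundStateShift κ k • P) hJt (hinv k)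

/-- Theorem 6.4(b) and (e): for `κ > 0` and an orthogonal projection `P`, the matrix
`U(k) = I + (2iκ/(k − iκ))·P` (for `k ∈ ℝ`) is unitary with
`U(k)† = U(k)⁻¹ = I − (2iκ/(k + iκ))·P`.  Consequently, if `J̃(k) = U(k)·J(k)` then
`J̃(k)†J̃(k) = J(k)†J(k)` for all real `k`, and whenever `J(k)` is invertible the
scattering matrices `S(k) = −J(−k)J(k)⁻¹` and `S̃(k) = −J̃(−k)J̃(k)⁻¹` satisfy
`S̃(k) = [I − (2iκ/(k+iκ))P]·S(k)·[I − (2iκ/(k+iκ))P]`. -/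
theorem jost_scattering_transform_remove_bound_state {n : ℕ}
    (κ : ℝ) (hκ : 0 < κ)
    (P : Matrix (Fin n) (Fin n) ℂ)
    (hPproj : P * P = P) (hPherm : Pᴴ = P)
    (J Jt : ℝ → Matrix (Fin n) (Fin n) ℂ)
    (hJt : ∀ k : ℝ,
      Jt k = (1 + ((2 * Complex.I * (κ:ℂ)) / ((k:ℂ) - Complex.I * (κ:ℂ))) • P) * J k) :
    (∀ k : ℝ,
      (1 + ((2 * Complex.I * (κ:ℂ)) / ((k:ℂ) - Complex.I * (κ:ℂ))) • P)ᴴ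
          = 1 - ((2 * Complex.I * (κ:ℂ)) / ((k:ℂ) + Complex.I * (κ:ℂ))) • P ∧
      (1 + ((2 * Complex.I * (κ:ℂ)) / ((k:ℂ) - Complex.I * (κ:ℂ))) • P) *
          (1 - ((2 * Complex.I * (κ:ℂ)) / ((k:ℂ) + Complex.I * (κ:ℂ))) • P) = 1 ∧
      (1 - ((2 * Complex.I * (κ:ℂ)) / ((k:ℂ) + Complex.I * (κ:ℂ))) • P) *
          (1 + ((2 * Complex.I * (κ:ℂ)) / ((k:ℂ) - Complex.I * (κ:ℂ))) • P) = 1) ∧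
    (∀ k : ℝ, (Jt k)ᴴ * Jt k = (J k)ᴴ * J k) ∧
    (∀ k : ℝ, IsUnit (J k) →
      -(Jt (-k)) * (Jt k)⁻¹
        = (1 - ((2 * Complex.I * (κ:ℂ)) / ((k:ℂ) + Complex.I * (κ:ℂ))) • P) *
            (-(J (-k)) * (J k)⁻¹) *
            (1 - ((2 * Complex.I * (κ:ℂ)) / ((k:ℂ) + Complex.I * (κ:ℂ))) • P)) :=
  jost_scattering_transform_remove_bound_state_general κ P hPproj hPherm J Jt hJt
end

section
/- Let Q be an n×n orthogonal projection and ξ : [0,∞) → M_n(ℂ) continuous with ξ(x)·Q = ξ(x) for all x. Define Ω(x) := Q + ∫₀ˣ ξ(y)†ξ(y) dy. Then: (i) for every x ≥ 0 and every nonzero v ∈ ℂⁿ with Q·v = v, one has v†·Ω(x)·v > 0, so the restriction of Ω(x) to the range of Q is positive definite (in particular invertible); and (ii) if Ω⁺ : [0,∞) → M_n(ℂ) satisfies Ω(x)Ω⁺(x) = Ω⁺(x)Ω(x) = Q and Ω⁺(x)·Q = Q·Ω⁺(x) = Ω⁺(x) for all x, then 𝒜(x,y) := −ξ(x)·Ω⁺(x)·ξ(y)†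 satisfies the Gel'fand–Levitan equation 𝒜(x,y) + G(x,y) + ∫₀ˣ 𝒜(x,z)·G(z,y) dz = 0 for 0 ≤ y ≤ x with the degenerate kernel G(x,y) := ξ(x)·ξ(y)†. (Theorem 8.2: the solution of the Gel'fand–Levitan system when a bound state is added.) -/
/-!
(i) Since `Q v = v`, the quadratic form of `Ω(x)` at `v` is `‖v‖²` plus the integral of the
nonnegative quantities `‖ξ(y) v‖²`.

(ii) The kernel `ξ(x) ξ(y)†` is degenerate, so the integral term is
`-ξ(x) Ω⁺(x) (Ω(x) - Q) ξ(y)†`; the relations `Ω⁺ Ω = Q`, `Ω⁺ Q = Ω⁺` and `ξ Q = ξ` turn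
`ξ(x) Ω⁺(x) (Ω(x) - Q)` into `ξ(x) - ξ(x) Ω⁺(x)`, and everything cancels.
-/

open Matrix MeasureTheory Set

attribute [local instance] Matrix.normedAddCommGroup Matrix.normedSpace

/-- The topology of `Matrix.normedAddCommGroup` agrees with `Matrix.topologicalSpace` only up to
unfolding, so instance search does not find this structure by itself. -/
noncomputable abbrev Matrix.enormedAddMonoid {m n α : Type*} [Fintype m] [Fintype n]
    [NormedAddCommGroup α] : ENormedAddMonoid (Matrix m n α) :=
  NormedAddGroup.toENormedAddMonoid

attribute [local instance] Matrix.enormedAddMonoid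

theorem LinearMap.intervalIntegral_comp_comm {E F : Type*} [NormedAddCommGroup E]
    [NormedSpace ℝ E] [FiniteDimensional ℝ E] [NormedAddCommGroup F] [NormedSpace ℝ F]
    [CompleteSpace F] (L : E →ₗ[ℝ] F) {f : ℝ → E} {a b : ℝ}
    (hf : IntervalIntegrable f volume a b) :
    ∫ t in a..b, L (f t) = L (∫ t in a..b, f t) :=
  haveI := FiniteDimensional.complete ℝ E
  (LinearMap.toContinuousLinearMap L).intervalIntegral_comp_comm hf

theorem mul_mul_eq_sub_mul_of_mul_add_eq {R : Type*} [Ring R] {Q S P X : R}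
    (hP : P * (Q + S) = Q) (hPQ : P * Q = P) (hXQ : X * Q = X) :
    X * P * S = X - X * P := by
  have hPS : P * S = Q - P := eq_sub_of_add_eq' (by rwa [mul_add, hPQ] at hP)
  rw [mul_assoc, hPS, mul_sub, hXQ]

namespace Matrix

open scoped ComplexOrder

variable {l m n o 𝕜 : Type*} [Fintype l] [Fintype m] [Fintype n] [Fintype o] [RCLike 𝕜]
  {a b : ℝ}

theorem intervalIntegral_mul_mul (A : Matrix l m 𝕜) (B : Matrix n o 𝕜) {f : ℝ → Matrix m n 𝕜}
    (hf : IntervalIntegrable f volume a b) :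
    ∫ t in a..b, A * f t * B = A * (∫ t in a..b, f t) * B :=
  (mulRightLinearMap l ℝ B ∘ₗ mulLeftLinearMap n ℝ A).intervalIntegral_comp_comm hf

theorem intervalIntegrable_conjTranspose_mul_self {ξ : ℝ → Matrix m n 𝕜}
    (hξ : ContinuousOn ξ (uIcc a b)) :
    IntervalIntegrable (fun t ↦ (ξ t)ᴴ * ξ t) volume a b :=
  ((continuous_id.matrix_conjTranspose.matrix_mul continuous_id).comp_continuousOn hξ
    ).intervalIntegrable

theorem re_star_dotProduct_intervalIntegral_mulVec_nonneg {f : ℝ → Matrix m m 𝕜}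
    (hab : a ≤ b) (hf : IntervalIntegrable f volume a b)
    (hpsd : ∀ t ∈ Icc a b, (f t).PosSemidef) (v : m → 𝕜) :
    0 ≤ RCLike.re (star v ⬝ᵥ ((∫ t in a..b, f t) *ᵥ v)) := by
  let q : Matrix m m 𝕜 →ₗ[ℝ] ℝ :=
    { toFun := fun M ↦ RCLike.re (star v ⬝ᵥ (M *ᵥ v))
      map_add' := fun M N ↦ by simp [add_mulVec]
      map_smul' := fun r M ↦ by simp [smul_mulVec, dotProduct_smul, RCLike.smul_re] }
  change 0 ≤ q _
  rw [← q.intervalIntegral_comp_comm hf]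
  exact intervalIntegral.integral_nonneg hab fun t ht ↦ (hpsd t ht).re_dotProduct_nonneg v

theorem re_star_dotProduct_add_mulVec_pos {Q S : Matrix m m 𝕜} {v : m → 𝕜} (hv : v ≠ 0)
    (hQv : Q *ᵥ v = v) (hS : 0 ≤ RCLike.re (star v ⬝ᵥ (S *ᵥ v))) :
    0 < RCLike.re (star v ⬝ᵥ ((Q + S) *ᵥ v)) := by
  have hvv : 0 < RCLike.re (star v ⬝ᵥ v) :=
    (RCLike.pos_iff.mp (dotProduct_star_self_pos_iff.mpr hv)).1
  rw [add_mulVec, dotProduct_add, map_add, hQv]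
  exact add_pos_of_pos_of_nonneg hvv hS

end Matrix

theorem gelfand_levitan_solution_add_bound_state_general {n : ℕ}
    (Q : Matrix (Fin n) (Fin n) ℂ)
    (ξ : ℝ → Matrix (Fin n) (Fin n) ℂ)
    (hξc : ContinuousOn ξ (Set.Ici (0:ℝ)))
    (hξQ : ∀ x ≥ (0:ℝ), ξ x * Q = ξ x) :
    (∀ x ≥ (0:ℝ), ∀ v : Fin n → ℂ, v ≠ 0 → Q *ᵥ v = v →
      0 < (star v ⬝ᵥ ((Q + ∫ y in (0:ℝ)..x, (ξ y)ᴴ * ξ y) *ᵥ v)).re) ∧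
    (∀ Ωp : ℝ → Matrix (Fin n) (Fin n) ℂ,
      (∀ x ≥ (0:ℝ), (Q + ∫ y in (0:ℝ)..x, (ξ y)ᴴ * ξ y) * Ωp x = Q) →
      (∀ x ≥ (0:ℝ), Ωp x * (Q + ∫ y in (0:ℝ)..x, (ξ y)ᴴ * ξ y) = Q) →
      (∀ x ≥ (0:ℝ), Ωp x * Q = Ωp x) →
      (∀ x ≥ (0:ℝ), Q * Ωp x = Ωp x) →
      ∀ x y : ℝ, 0 ≤ y → y ≤ x →
        -(ξ x * Ωp x * (ξ y)ᴴ) + ξ x * (ξ y)ᴴ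
          + ∫ z in (0:ℝ)..x, -(ξ x * Ωp x * (ξ z)ᴴ) * (ξ z * (ξ y)ᴴ) = 0) := by
  have hint : ∀ x ≥ (0:ℝ), IntervalIntegrable (fun y ↦ (ξ y)ᴴ * ξ y) volume 0 x := fun x hx ↦
    intervalIntegrable_conjTranspose_mul_self <| hξc.mono <| by
      simpa [uIcc_of_le hx] using Icc_subset_Ici_self
  refine ⟨fun x hx v hv hQv ↦ ?_, fun Ωp _ hΩ hΩQ _ x y hy hyx ↦ ?_⟩
  · open scoped ComplexOrder in
    exact re_star_dotProduct_add_mulVec_pos hv hQv <|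
      re_star_dotProduct_intervalIntegral_mulVec_nonneg hx (hint x hx)
        (fun t _ ↦ posSemidef_conjTranspose_mul_self (ξ t)) v
  · have hx : 0 ≤ x := hy.trans hyx
    have hkernel : ∫ z in (0:ℝ)..x, -(ξ x * Ωp x * (ξ z)ᴴ) * (ξ z * (ξ y)ᴴ)
        = -(ξ x * Ωp x * (∫ z in (0:ℝ)..x, (ξ z)ᴴ * ξ z) * (ξ y)ᴴ) := by
      rw [← neg_mul, ← neg_mul, ← intervalIntegral_mul_mul _ _ (hint x hx)]
      congr 1 with z
      noncomm_ring
    rw [hkernel, mul_mul_eq_sub_mul_of_mul_add_eq (hΩ x hx) (hΩQ x hx) (hξQ x hx)]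
    noncomm_ring

/-- Theorem 8.2: the solution of the Gel'fand–Levitan system when a bound state is added.
With `Ω(x) = Q + ∫₀ˣ ξ†ξ`: (i) `v†·Ω(x)·v > 0` for every `x ≥ 0` and every nonzero `v`
with `Q·v = v`; (ii) if `Ω⁺` satisfies `Ω·Ω⁺ = Ω⁺·Ω = Q` and `Ω⁺·Q = Q·Ω⁺ = Ω⁺`,
then `𝒜(x,y) = −ξ(x)·Ω⁺(x)·ξ(y)†` satisfies the Gel'fand–Levitan equation
`𝒜(x,y) + G(x,y) + ∫₀ˣ 𝒜(x,z)·G(z,y) dz = 0` for `0 ≤ y ≤ x`, with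
`G(x,y) = ξ(x)·ξ(y)†`. -/
theorem gelfand_levitan_solution_add_bound_state {n : ℕ}
    (Q : Matrix (Fin n) (Fin n) ℂ)
    (hQproj : Q * Q = Q) (hQherm : Qᴴ = Q)
    (ξ : ℝ → Matrix (Fin n) (Fin n) ℂ)
    (hξc : ContinuousOn ξ (Set.Ici (0:ℝ)))
    (hξQ : ∀ x ≥ (0:ℝ), ξ x * Q = ξ x) :
    (∀ x ≥ (0:ℝ), ∀ v : Fin n → ℂ, v ≠ 0 → Q *ᵥ v = v →
      0 < (star v ⬝ᵥ ((Q + ∫ y in (0:ℝ)..x, (ξ y)ᴴ * ξ y) *ᵥ v)).re) ∧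
    (∀ Ωp : ℝ → Matrix (Fin n) (Fin n) ℂ,
      (∀ x ≥ (0:ℝ), (Q + ∫ y in (0:ℝ)..x, (ξ y)ᴴ * ξ y) * Ωp x = Q) →
      (∀ x ≥ (0:ℝ), Ωp x * (Q + ∫ y in (0:ℝ)..x, (ξ y)ᴴ * ξ y) = Q) →
      (∀ x ≥ (0:ℝ), Ωp x * Q = Ωp x) →
      (∀ x ≥ (0:ℝ), Q * Ωp x = Ωp x) →
      ∀ x y : ℝ, 0 ≤ y → y ≤ x →
        -(ξ x * Ωp x * (ξ y)ᴴ) + ξ x * (ξ y)ᴴ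
          + ∫ z in (0:ℝ)..x, -(ξ x * Ωp x * (ξ z)ᴴ) * (ξ z * (ξ y)ᴴ) = 0) :=
  gelfand_levitan_solution_add_bound_state_general Q ξ hξc hξQ
end

section
/- For i = 1, 2, let Q_i be an n×n orthogonal projection, let G_i be a Hermitian positive semidefinite n×n matrix with G_i·Q_i = Q_i·G_i = G_i and such that Q_i·v = v together with G_i·v = 0 imply v = 0, and set H_i := I − Q_i + G_i. Then each H_i is positive definite; moreover, if S_i are positive definite Hermitian matrices with S_i² = H_i (so S_i = H_i^{1/2}) and C₁ = C₂, where C_i := S_i⁻¹·Q_i, then Q₁ = Q₂, G₁ = G₂ and H₁ = H₂. (Proposition 8.1: a Gel'fand–Levitan normalization matrix C̃_{N+1} = H̃_{N+1}^{−1/2}·Q̃_{N+1} uniquely determines the matrices Q̃_{N+1}, G̃_{N+1} and H̃_{N+1}, and in this construction H̃_{N+1} is automatically positive definite.) -/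
/-!
`1 - Q` and `G` are positive semidefinite and no nonzero vector is annihilated by both, so
`H = 1 - Q + G` is positive definite.
If `S₁⁻¹ Q₁ = S₂⁻¹ Q₂ = C`, then `Qᵢ = Sᵢ C` gives `Q₁ Q₂ = Q₁` and `Q₂ Q₁ = Q₂`, which forces
`Q₁ = Q₂ =: Q` for orthogonal projections. Since `S² = H` is the identity on the range of `1 - Q`
and `S + 1` is invertible, `S` is the identity there as well, so `S` commutes with `Q`. Then
`S₁⁻¹ Q = S₂⁻¹ Q` yields `S₁ Q = S₂ Q`, and hence `Gᵢ = Hᵢ Q = Sᵢ² Q` coincide.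
-/

open Matrix
open scoped ComplexOrder

section

variable {R : Type*}

theorem IsSelfAdjoint.commute_of_mul_eq_right [Mul R] [StarMul R] {s p : R}
    (hs : IsSelfAdjoint s) (hp : IsSelfAdjoint p) (h : s * p = p) : Commute s p := by
  have hps : p * s = p := by simpa [star_mul, hs.star_eq, hp.star_eq] using congr(star $h)
  exact h.trans hps.symm

theorem IsStarProjection.eq_of_mul_eq_left_of_mul_eq_left [Mul R] [StarMul R] {p q : R}
    (hp : IsStarProjection p) (hq : IsStarProjection q) (hpq : p * q = p) (hqp : q * p = q) :
    p = q := by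
  calc p = star (p * q) := by rw [hpq, hp.isSelfAdjoint.star_eq]
    _ = q * p := by rw [star_mul, hp.isSelfAdjoint.star_eq, hq.isSelfAdjoint.star_eq]
    _ = q := hqp

theorem IsIdempotentElem.one_sub_add_mul_self [Ring R] {q g : R} (hq : IsIdempotentElem q)
    (hg : g * q = g) : (1 - q + g) * q = g := by
  rw [add_mul, sub_mul, one_mul, hq.eq, hg, sub_self, zero_add]

theorem IsIdempotentElem.one_sub_add_mul_one_sub [Ring R] {q g : R} (hq : IsIdempotentElem q)
    (hg : g * q = g) : (1 - q + g) * (1 - q) = 1 - q := by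
  rw [add_mul, hq.one_sub.eq, mul_sub, mul_one, hg, sub_self, add_zero]

theorem Commute.mul_self_mul_eq_of_mul_eq [Monoid R] {a b q : R} (hb : Commute b q)
    (h : a * q = b * q) : a * a * q = b * b * q := by
  calc a * a * q = a * (b * q) := by rw [mul_assoc, h]
    _ = a * q * b := by rw [hb.eq, mul_assoc]
    _ = b * b * q := by rw [h, mul_assoc, ← hb.eq, mul_assoc]

end

namespace Matrix

variable {ι : Type*} [Fintype ι] [DecidableEq ι]

section CommRing

variable {α : Type*} [CommRing α]

theorem _root_.Commute.nonsing_inv_left {A B : Matrix ι ι α} (h : Commute A B) :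
    Commute A⁻¹ B := by
  rw [nonsing_inv_eq_ringInverse]
  by_cases hA : IsUnit A
  · obtain ⟨u, rfl⟩ := hA
    rw [Ring.inverse_unit]
    exact h.units_inv_left
  · rw [Ring.inverse_non_unit _ hA]
    exact Commute.zero_left B

theorem mul_eq_mul_of_nonsing_inv_mul_eq {A B Q : Matrix ι ι α} (hA : IsUnit A.det)
    (hB : IsUnit B.det) (hAQ : Commute A Q) (h : A⁻¹ * Q = B⁻¹ * Q) : A * Q = B * Q := by
  have hQ : B * Q * A⁻¹ = Q := by
    rw [mul_assoc, ← hAQ.nonsing_inv_left.eq, h, mul_nonsing_inv_cancel_left _ _ hB]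
  calc A * Q = Q * A := hAQ.eq
    _ = B * Q * A⁻¹ * A := by rw [hQ]
    _ = B * Q := nonsing_inv_mul_cancel_right _ _ hA

theorem _root_.IsStarProjection.eq_of_nonsing_inv_mul_eq [StarRing α] {A B P Q : Matrix ι ι α}
    (hA : IsUnit A.det) (hB : IsUnit B.det) (hP : IsStarProjection P) (hQ : IsStarProjection Q)
    (h : A⁻¹ * P = B⁻¹ * Q) : P = Q := by
  have hPQ : P * Q = P := by
    rw [← mul_nonsing_inv_cancel_left A P hA, h, mul_assoc, mul_assoc, hQ.isIdempotentElem.eq]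
  have hQP : Q * P = Q := by
    rw [← mul_nonsing_inv_cancel_left B Q hB, ← h, mul_assoc, mul_assoc, hP.isIdempotentElem.eq]
  exact hP.eq_of_mul_eq_left_of_mul_eq_left hQ hPQ hQP

end CommRing

variable {𝕜 : Type*} [RCLike 𝕜]

theorem PosSemidef.mul_eq_self_of_mul_self_mul_eq_self {S P : Matrix ι ι 𝕜} (hS : S.PosSemidef)
    (h : S * S * P = P) : S * P = P := by
  have hunit : IsUnit (S + 1) := (PosDef.posSemidef_add hS PosDef.one).isUnit
  have hzero : (S + 1) * ((S - 1) * P) = 0 := by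
    linear_combination (norm := noncomm_ring) h
  rw [← sub_eq_zero, ← sub_one_mul]
  exact hunit.mul_right_eq_zero.mp hzero

open scoped MatrixOrder in
theorem posDef_one_sub_add {Q G : Matrix ι ι 𝕜} (hQ : IsStarProjection Q) (hG : G.PosSemidef)
    (hker : ∀ v, Q *ᵥ v = v → G *ᵥ v = 0 → v = 0) : (1 - Q + G).PosDef := by
  have hP : (1 - Q).PosSemidef := hQ.one_sub_nonneg.posSemidef
  refine .of_dotProduct_mulVec_pos (hP.add hG).isHermitian fun x hx =>
    ((hP.add hG).dotProduct_mulVec_nonneg x).lt_of_ne' fun h0 => hx ?_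
  rw [add_mulVec, dotProduct_add, add_eq_zero_iff_of_nonneg (hP.dotProduct_mulVec_nonneg x)
    (hG.dotProduct_mulVec_nonneg x), hP.dotProduct_mulVec_zero_iff,
    hG.dotProduct_mulVec_zero_iff, sub_mulVec, one_mulVec, sub_eq_zero] at h0
  exact hker x h0.1.symm h0.2

theorem commute_of_mul_self_eq_one_sub_add {S Q G : Matrix ι ι 𝕜} (hS : S.PosSemidef)
    (hQ : IsStarProjection Q) (hGQ : G * Q = G) (hSS : S * S = 1 - Q + G) : Commute S Q := by
  have hfix : S * (1 - Q) = 1 - Q :=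
    hS.mul_eq_self_of_mul_self_mul_eq_self <| by
      rw [hSS, hQ.isIdempotentElem.one_sub_add_mul_one_sub hGQ]
  have h := hS.isHermitian.isSelfAdjoint.commute_of_mul_eq_right hQ.one_sub.isSelfAdjoint hfix
  simpa using (Commute.one_right S).sub_right h

end Matrix

theorem normalization_matrix_determines_data_general {n : ℕ}
    (Q₁ Q₂ G₁ G₂ S₁ S₂ : Matrix (Fin n) (Fin n) ℂ)
    (hQ₁proj : Q₁ * Q₁ = Q₁) (hQ₁herm : Q₁ᴴ = Q₁)
    (hQ₂proj : Q₂ * Q₂ = Q₂) (hQ₂herm : Q₂ᴴ = Q₂)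
    (hG₁ : G₁.PosSemidef) (hG₂ : G₂.PosSemidef)
    (hG₁Q : G₁ * Q₁ = G₁) (hG₂Q : G₂ * Q₂ = G₂)
    (hker₁ : ∀ v : Fin n → ℂ, Q₁ *ᵥ v = v → G₁ *ᵥ v = 0 → v = 0)
    (hker₂ : ∀ v : Fin n → ℂ, Q₂ *ᵥ v = v → G₂ *ᵥ v = 0 → v = 0) :
    (1 - Q₁ + G₁).PosDef ∧ (1 - Q₂ + G₂).PosDef ∧
    (S₁.PosDef → S₂.PosDef → S₁ * S₁ = 1 - Q₁ + G₁ → S₂ * S₂ = 1 - Q₂ + G₂ →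
      S₁⁻¹ * Q₁ = S₂⁻¹ * Q₂ →
      Q₁ = Q₂ ∧ G₁ = G₂ ∧ 1 - Q₁ + G₁ = 1 - Q₂ + G₂) := by
  have hQ₁ : IsStarProjection Q₁ := ⟨hQ₁proj, hQ₁herm⟩
  have hQ₂ : IsStarProjection Q₂ := ⟨hQ₂proj, hQ₂herm⟩
  refine ⟨posDef_one_sub_add hQ₁ hG₁ hker₁, posDef_one_sub_add hQ₂ hG₂ hker₂,
    fun hS₁ hS₂ hSS₁ hSS₂ hC => ?_⟩
  have hd₁ : IsUnit S₁.det := hS₁.det_pos.ne'.isUnit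
  have hd₂ : IsUnit S₂.det := hS₂.det_pos.ne'.isUnit
  obtain rfl : Q₁ = Q₂ := hQ₁.eq_of_nonsing_inv_mul_eq hd₁ hd₂ hQ₂ hC
  have hS₁Q : Commute S₁ Q₁ := commute_of_mul_self_eq_one_sub_add hS₁.posSemidef hQ₁ hG₁Q hSS₁
  have hS₂Q : Commute S₂ Q₁ := commute_of_mul_self_eq_one_sub_add hS₂.posSemidef hQ₁ hG₂Q hSS₂
  have hG : G₁ = G₂ :=
    calc G₁ = S₁ * S₁ * Q₁ := by rw [hSS₁, hQ₁.isIdempotentElem.one_sub_add_mul_self hG₁Q]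
      _ = S₂ * S₂ * Q₁ :=
        hS₂Q.mul_self_mul_eq_of_mul_eq (mul_eq_mul_of_nonsing_inv_mul_eq hd₁ hd₂ hS₁Q hC)
      _ = G₂ := by rw [hSS₂, hQ₁.isIdempotentElem.one_sub_add_mul_self hG₂Q]
  exact ⟨rfl, hG, by rw [hG]⟩

/-- Proposition 8.1: for `i = 1, 2`, with `Q_i` an orthogonal projection, `G_i` Hermitian
positive semidefinite commuting with `Q_i` (`G_iQ_i = Q_iG_i = G_i`) and injective on the
range of `Q_i`, the matrix `H_i = I − Q_i + G_i` is positive definite; moreover, if `S_i`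
are positive definite with `S_i² = H_i` (so `S_i = H_i^{1/2}`) and the normalization
matrices `C_i = S_i⁻¹·Q_i` coincide, then `Q₁ = Q₂`, `G₁ = G₂` and `H₁ = H₂`. -/
theorem normalization_matrix_determines_data {n : ℕ}
    (Q₁ Q₂ G₁ G₂ S₁ S₂ : Matrix (Fin n) (Fin n) ℂ)
    (hQ₁proj : Q₁ * Q₁ = Q₁) (hQ₁herm : Q₁ᴴ = Q₁)
    (hQ₂proj : Q₂ * Q₂ = Q₂) (hQ₂herm : Q₂ᴴ = Q₂)
    (hG₁ : G₁.PosSemidef) (hG₂ : G₂.PosSemidef)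
    (hG₁Q : G₁ * Q₁ = G₁) (hQG₁ : Q₁ * G₁ = G₁)
    (hG₂Q : G₂ * Q₂ = G₂) (hQG₂ : Q₂ * G₂ = G₂)
    (hker₁ : ∀ v : Fin n → ℂ, Q₁ *ᵥ v = v → G₁ *ᵥ v = 0 → v = 0)
    (hker₂ : ∀ v : Fin n → ℂ, Q₂ *ᵥ v = v → G₂ *ᵥ v = 0 → v = 0) :
    (1 - Q₁ + G₁).PosDef ∧ (1 - Q₂ + G₂).PosDef ∧
    (S₁.PosDef → S₂.PosDef → S₁ * S₁ = 1 - Q₁ + G₁ → S₂ * S₂ = 1 - Q₂ + G₂ →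
      S₁⁻¹ * Q₁ = S₂⁻¹ * Q₂ →
      Q₁ = Q₂ ∧ G₁ = G₂ ∧ 1 - Q₁ + G₁ = 1 - Q₂ + G₂) :=
  normalization_matrix_determines_data_general Q₁ Q₂ G₁ G₂ S₁ S₂ hQ₁proj hQ₁herm hQ₂proj hQ₂herm hG₁
    hG₂ hG₁Q hG₂Q hker₁ hker₂
end
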